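/- arXiv:1301.5116 — 6 statements merged into one kernel-verified Lean document; each statement's English description precedes it below -/
import Mathlib

section
/- Let $\mathcal V$ and $\mathcal W$ be complex Hilbert spaces with orthogonal direct sum decompositions $\mathcal V=\mathcal V_1\oplus\mathcal V_2$ and $\mathcal W=\mathcal W_1\oplus\mathcal W_2$. Let $X:\mathcal V\to\mathcal V$ be a bounded selfadjoint operator whose range is contained in $\mathcal V_1$, and let $Y:\mathcal W\to\mathcal V$ be a bounded operator such that $\mathcal W_1=Y^{-1}[\mathcal V_1]$, the inverse image of $\mathcal V_1$ under $Y$. Let $P_{\mathcal W_1}$ denote the orthogonal projection of $\mathcal W$ onto $\mathcal W_1$. Then $YY^*-X$ is positive if and only if $YP_{\mathcal W_1}Y^*-X$ is positive; moreover, the rank of $YP_{\mathcal W_1}Y^*-X$ is at most $\dim\mathcal V_1$. -/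
noncomputable section

open Complex MeasureTheory ContinuousLinearMap
open scoped Matrix

/-- A bounded operator `T` on a complex inner product space is *positive* if
`⟨T x, x⟩ ≥ 0` (i.e. the inner product is a nonnegative real number) for all `x`. -/
def OpNonneg {H : Type*} [NormedAddCommGroup H] [InnerProductSpace ℂ H]
    (T : H →L[ℂ] H) : Prop :=
  ∀ x : H, 0 ≤ (inner ℂ (T x) x : ℂ).re ∧ (inner ℂ (T x) x : ℂ).im = 0

/-- The rank of a bounded operator: the dimension of its range. -/
def opRank {H K : Type*} [NormedAddCommGroup H] [InnerProductSpace ℂ H]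
    [NormedAddCommGroup K] [InnerProductSpace ℂ K] (T : H →L[ℂ] K) : Cardinal :=
  Module.rank ℂ (LinearMap.range (T : H →ₗ[ℂ] K))
universe u

/-- helper: positivity of a real-part condition for `(a:ℂ)^2 - z` with `z` real. -/
lemma aux_nonneg_sub (a : ℝ) (z : ℂ) (hz : z.im = 0) :
    (0 ≤ (((a : ℂ)) ^ 2 - z).re ∧ (((a : ℂ)) ^ 2 - z).im = 0) ↔ z.re ≤ a ^ 2 := by
  rw [← Complex.ofReal_pow]
  simp only [Complex.sub_re, Complex.sub_im, Complex.ofReal_re, Complex.ofReal_im, hz, sub_zero]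
  constructor
  · rintro ⟨h, -⟩; linarith
  · intro h; exact ⟨by linarith, trivial⟩

/-- Lemma 4.1 (first part): with `V = V₁ ⊕ V₂`, `W = W₁ ⊕ W₂` orthogonal
decompositions, `X` selfadjoint with range in `V₁`, `Y` bounded with
`W₁ = Y⁻¹[V₁]`, and `P` the orthogonal projection onto `W₁`:
`YY* - X ≥ 0 ↔ Y P Y* - X ≥ 0`, and `rank (Y P Y* - X) ≤ dim V₁`. -/

theorem leech_lempos_first
    {V W : Type u} [NormedAddCommGroup V] [InnerProductSpace ℂ V] [CompleteSpace V]
    [NormedAddCommGroup W] [InnerProductSpace ℂ W] [CompleteSpace W]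
    (V1 V2 : Submodule ℂ V) (W1 W2 : Submodule ℂ W)
    (hV1closed : IsClosed (V1 : Set V)) (hW1closed : IsClosed (W1 : Set W))
    (hVorth : ∀ v1 ∈ V1, ∀ v2 ∈ V2, (inner ℂ v1 v2 : ℂ) = 0)
    (hVsum : V1 ⊔ V2 = ⊤)
    (hWorth : ∀ w1 ∈ W1, ∀ w2 ∈ W2, (inner ℂ w1 w2 : ℂ) = 0)
    (hWsum : W1 ⊔ W2 = ⊤)
    (X : V →L[ℂ] V) (hXsa : IsSelfAdjoint X)
    (hXrange : LinearMap.range (X : V →ₗ[ℂ] V) ≤ V1)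
    (Y : W →L[ℂ] V)
    (hW1 : W1 = Submodule.comap (Y : W →ₗ[ℂ] V) V1)
    (P : W →L[ℂ] W)
    (hPidem : P ∘L P = P) (hPsa : IsSelfAdjoint P)
    (hPrange : LinearMap.range (P : W →ₗ[ℂ] W) = W1) :
    (OpNonneg (Y ∘L adjoint Y - X) ↔ OpNonneg (Y ∘L P ∘L adjoint Y - X)) ∧
      opRank (Y ∘L P ∘L adjoint Y - X) ≤ Module.rank ℂ V1 := by
  haveI : CompleteSpace V1 := hV1closed.completeSpace_coe
  set A : V →L[ℂ] W := ContinuousLinearMap.adjoint Y with hA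
  -- adjoint pairing facts
  have hYinner : ∀ (w : W) (x : V), (inner ℂ (Y w) x : ℂ) = inner ℂ w (A x) :=
    fun w x => (ContinuousLinearMap.adjoint_inner_right Y w x).symm
  have hAinner : ∀ (x : V) (w : W), (inner ℂ (A x) w : ℂ) = inner ℂ x (Y w) :=
    fun x w => ContinuousLinearMap.adjoint_inner_left Y w x
  -- P facts
  have hPmem : ∀ w : W, P w ∈ W1 := fun w => hPrange ▸ ⟨w, rfl⟩
  have hPP : ∀ z : W, P (P z) = P z := by
    intro z
    have h := ContinuousLinearMap.ext_iff.mp hPidem z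
    rwa [ContinuousLinearMap.comp_apply] at h
  have hPfix : ∀ w ∈ W1, P w = w := by
    intro w hw
    rw [← hPrange] at hw
    obtain ⟨z, hz⟩ := hw
    rw [← hz]
    exact hPP z
  have hPorthog : ∀ (v w : W), v ∈ W1 → (inner ℂ v (w - P w) : ℂ) = 0 := by
    intro v w hv
    rw [← hPfix v hv, ← ContinuousLinearMap.adjoint_inner_right P, hPsa.adjoint_eq,
      map_sub, hPP, sub_self, inner_zero_right]
  have hsub_orth : ∀ w : W, w - P w ∈ W1ᗮ := fun w =>
    (Submodule.mem_orthogonal _ _).mpr fun v hv => hPorthog v w hv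
  have hPzero : ∀ u ∈ W1ᗮ, P u = 0 := by
    intro u hu
    have h1 : (inner ℂ (P u) u : ℂ) = 0 :=
      (Submodule.mem_orthogonal _ u).mp hu _ (hPmem u)
    have h2 := hPorthog (P u) u (hPmem u)
    rw [inner_sub_right, h1, zero_sub, neg_eq_zero] at h2
    exact inner_self_eq_zero.mp h2
  have hPself : ∀ w : W, (inner ℂ (P w) w : ℂ) = ((‖P w‖ : ℂ)) ^ 2 := by
    intro w
    have h1 : (inner ℂ (P w) w : ℂ) = inner ℂ (P w) (P w) + inner ℂ (P w) (w - P w) := by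
      rw [← inner_add_right]
      congr 1
      abel
    rw [h1, hPorthog (P w) w (hPmem w), add_zero, inner_self_eq_norm_sq_to_K]
    rfl
  -- X facts
  have hXmem : ∀ x : V, X x ∈ V1 := fun x => hXrange ⟨x, rfl⟩
  have hXzero : ∀ u ∈ V1ᗮ, X u = 0 := by
    intro u hu
    have h : (inner ℂ (X u) (X u) : ℂ) = 0 := by
      conv_lhs => rw [← hXsa.adjoint_eq, ContinuousLinearMap.adjoint_inner_left]
      exact (Submodule.mem_orthogonal' _ u).mp hu _ (hXmem _)
    exact inner_self_eq_zero.mp h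
  have hXreal : ∀ x : V, ((inner ℂ (X x) x : ℂ)).im = 0 := by
    intro x
    have h : (inner ℂ (X x) x : ℂ) = (starRingEnd ℂ) (inner ℂ (X x) x : ℂ) := by
      conv_lhs => rw [← hXsa.adjoint_eq, ContinuousLinearMap.adjoint_inner_left]
      exact (inner_conj_symm x (X x)).symm
    exact Complex.conj_eq_iff_im.mp h.symm
  have hAorth : ∀ u ∈ V1ᗮ, A u ∈ W1ᗮ := by
    intro u hu
    rw [Submodule.mem_orthogonal]
    intro w hw
    have hYw : Y w ∈ V1 := by rw [hW1] at hw; exact hw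
    calc (inner ℂ w (A u) : ℂ) = inner ℂ (Y w) u :=
          ContinuousLinearMap.adjoint_inner_right Y w u
      _ = 0 := (Submodule.mem_orthogonal _ u).mp hu _ hYw
  -- quadratic form computations
  have hc1 : ∀ x : V, (inner ℂ ((Y ∘L A - X) x) x : ℂ) = ((‖A x‖ : ℂ)) ^ 2 - inner ℂ (X x) x := by
    intro x
    rw [ContinuousLinearMap.sub_apply, inner_sub_left, ContinuousLinearMap.comp_apply,
      hYinner, inner_self_eq_norm_sq_to_K]
    rfl
  have hc2 : ∀ x : V,
      (inner ℂ ((Y ∘L P ∘L A - X) x) x : ℂ) = ((‖P (A x)‖ : ℂ)) ^ 2 - inner ℂ (X x) x := by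
    intro x
    rw [ContinuousLinearMap.sub_apply, inner_sub_left]
    simp only [ContinuousLinearMap.comp_apply]
    rw [hYinner, hPself]
  have hchar1 : OpNonneg (Y ∘L A - X) ↔ ∀ x : V, (inner ℂ (X x) x : ℂ).re ≤ ‖A x‖ ^ 2 := by
    unfold OpNonneg
    refine forall_congr' fun x => ?_
    rw [hc1 x]
    exact aux_nonneg_sub _ _ (hXreal x)
  have hchar2 : OpNonneg (Y ∘L P ∘L A - X) ↔
      ∀ x : V, (inner ℂ (X x) x : ℂ).re ≤ ‖P (A x)‖ ^ 2 := by
    unfold OpNonneg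
    refine forall_congr' fun x => ?_
    rw [hc2 x]
    exact aux_nonneg_sub _ _ (hXreal x)
  -- easy direction: ‖P a‖² ≤ ‖a‖²
  have hPle : ∀ a : W, ‖P a‖ ^ 2 ≤ ‖a‖ ^ 2 := by
    intro a
    have h0 : (inner ℂ (P a) (a - P a) : ℂ) = 0 := hPorthog (P a) a (hPmem a)
    have h := norm_add_sq_eq_norm_sq_add_norm_sq_of_inner_eq_zero (𝕜 := ℂ) _ _ h0
    have hsum : P a + (a - P a) = a := by abel
    rw [hsum] at h
    nlinarith [mul_self_nonneg ‖a - P a‖]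
  -- density: W1ᗮ is contained in the closure of A '' V1ᗮ
  have hMclosure : W1ᗮ ≤ (Submodule.map (A : V →ₗ[ℂ] W) V1ᗮ).topologicalClosure := by
    rw [← Submodule.orthogonal_orthogonal_eq_closure]
    apply Submodule.orthogonal_le
    intro w hw
    rw [hW1, Submodule.mem_comap]
    have hYwmem : Y w ∈ V1ᗮᗮ := by
      rw [Submodule.mem_orthogonal]
      intro u hu
      have h0 : (inner ℂ ((A : V →ₗ[ℂ] W) u) w : ℂ) = 0 :=
        (Submodule.mem_orthogonal _ w).mp hw _ ⟨u, hu, rfl⟩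
      calc (inner ℂ u (Y w) : ℂ) = inner ℂ (A u) w := (hAinner u w).symm
        _ = 0 := h0
    rwa [V1.orthogonal_orthogonal] at hYwmem
  -- hard direction
  have hmain : (∀ x : V, (inner ℂ (X x) x : ℂ).re ≤ ‖A x‖ ^ 2) →
      ∀ x : V, (inner ℂ (X x) x : ℂ).re ≤ ‖P (A x)‖ ^ 2 := by
    intro hpos x
    set q : V := (V1.orthogonalProjectionOnto x : V) with hq
    have hqmem : q ∈ V1 := Submodule.coe_mem _
    have hu0 : x - q ∈ V1ᗮ := Submodule.sub_starProjection_mem_orthogonal x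
    have hXxq : X x = X q := by
      have h := hXzero _ hu0
      rw [map_sub, sub_eq_zero] at h
      exact h
    have hXinner : (inner ℂ (X x) x : ℂ) = inner ℂ (X q) q := by
      rw [hXxq]
      have hx : (inner ℂ (X q) q : ℂ) + inner ℂ (X q) (x - q) = inner ℂ (X q) x := by
        rw [← inner_add_right]
        congr 1
        abel
      have h0 : (inner ℂ (X q) (x - q) : ℂ) = 0 :=
        (Submodule.mem_orthogonal _ _).mp hu0 _ (hXmem q)
      rw [← hx, h0, add_zero]
    have hPAxq : P (A x) = P (A q) := by
      have h2 : P (A (x - q)) = 0 := hPzero _ (hAorth _ hu0)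
      rw [map_sub, map_sub, sub_eq_zero] at h2
      exact h2
    -- perturbation bound
    have hbound : ∀ u ∈ V1ᗮ,
        (inner ℂ (X x) x : ℂ).re ≤ ‖P (A q)‖ ^ 2 + ‖(A q - P (A q)) + A u‖ ^ 2 := by
      intro u hu
      have hy := hpos (q + u)
      have hXy : (inner ℂ (X (q + u)) (q + u) : ℂ) = inner ℂ (X q) q := by
        rw [map_add, hXzero u hu, add_zero, inner_add_right]
        have h0 : (inner ℂ (X q) u : ℂ) = 0 :=
          (Submodule.mem_orthogonal _ _).mp hu _ (hXmem q)
        rw [h0, add_zero]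
      have hAy : A (q + u) = P (A q) + ((A q - P (A q)) + A u) := by
        rw [map_add]; abel
      have horth : (inner ℂ (P (A q)) ((A q - P (A q)) + A u) : ℂ) = 0 := by
        have hmem2 : (A q - P (A q)) + A u ∈ W1ᗮ :=
          Submodule.add_mem _ (hsub_orth (A q)) (hAorth u hu)
        exact (Submodule.mem_orthogonal _ _).mp hmem2 _ (hPmem (A q))
      have hpyth : ‖A (q + u)‖ ^ 2 = ‖P (A q)‖ ^ 2 + ‖(A q - P (A q)) + A u‖ ^ 2 := by
        rw [hAy]
        have h := norm_add_sq_eq_norm_sq_add_norm_sq_of_inner_eq_zero (𝕜 := ℂ) _ _ horth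
        rw [pow_two, pow_two, pow_two]
        exact h
      rw [hXy] at hy
      rw [hpyth] at hy
      rw [hXinner]
      exact hy
    have hkey : ∀ ε : ℝ, 0 < ε → (inner ℂ (X x) x : ℂ).re ≤ ‖P (A q)‖ ^ 2 + ε := by
      intro ε hε
      have hmemcl : -(A q - P (A q)) ∈
          (Submodule.map (A : V →ₗ[ℂ] W) V1ᗮ).topologicalClosure :=
        hMclosure (Submodule.neg_mem _ (hsub_orth (A q)))
      have hmem' : -(A q - P (A q)) ∈
          closure ((Submodule.map (A : V →ₗ[ℂ] W) V1ᗮ : Set W)) := hmemcl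
      obtain ⟨b, hb, hdist⟩ :=
        Metric.mem_closure_iff.mp hmem' (Real.sqrt ε) (Real.sqrt_pos.mpr hε)
      obtain ⟨u, hu, rfl⟩ := hb
      have h1 := hbound u hu
      have h2 : ‖(A q - P (A q)) + A u‖ < Real.sqrt ε := by
        have heq : (A q - P (A q)) + A u = -((-(A q - P (A q))) - A u) := by abel
        rw [heq, norm_neg, ← dist_eq_norm]
        exact hdist
      have h3 : ‖(A q - P (A q)) + A u‖ ^ 2 ≤ ε := by
        nlinarith [Real.sq_sqrt hε.le, norm_nonneg ((A q - P (A q)) + A u),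
          Real.sqrt_nonneg ε]
      linarith
    have hfin : (inner ℂ (X x) x : ℂ).re ≤ ‖P (A q)‖ ^ 2 :=
      le_of_forall_pos_le_add hkey
    rw [hPAxq]
    exact hfin
  constructor
  · constructor
    · intro h
      exact hchar2.mpr (hmain (hchar1.mp h))
    · intro h
      refine hchar1.mpr fun x => ?_
      exact le_trans (hchar2.mp h x) (hPle (A x))
  · -- rank bound
    have hrange : LinearMap.range ((Y ∘L P ∘L A - X : V →L[ℂ] V) : V →ₗ[ℂ] V) ≤ V1 := by
      rintro v ⟨x, rfl⟩
      have hval : ((Y ∘L P ∘L A - X : V →L[ℂ] V) : V →ₗ[ℂ] V) x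
          = Y (P (A x)) - X x := by
        simp [ContinuousLinearMap.comp_apply]
      rw [hval]
      apply Submodule.sub_mem
      · have hPm : P (A x) ∈ W1 := hPmem (A x)
        rw [hW1, Submodule.mem_comap] at hPm
        exact hPm
      · exact hXmem x
    exact Submodule.rank_mono hrange
end
end

section
/- Let $\mathcal V$ and $\mathcal W$ be complex Hilbert spaces with orthogonal direct sum decompositions $\mathcal V=\mathcal V_1\oplus\mathcal V_2$ and $\mathcal W=\mathcal W_1\oplus\mathcal W_2$. Let $X:\mathcal V\to\mathcal V$ be a bounded selfadjoint operator whose range is contained in $\mathcal V_1$, and let $Y:\mathcal W\to\mathcal V$ be a bounded operator such that $\mathcal W_1=Y^{-1}[\mathcal V_1]$, the inverse image of $\mathcal V_1$ under $Y$. Let $P_{\mathcal W_1}$ denote the orthogonal projection of $\mathcal W$ onto $\mathcal W_1$. Assume in addition that $YY^*-X$ is positive, that $Y$ is injective, and that $X$ is positive. Then the rank of $YP_{\mathcal W_1}Y^*$ equals $\dim\mathcal W_1$, the rank of $X$ is at most $\dim\mathcal W_1$, and the rank of $YP_{\mathcal W_1}Y^*-X$ is at most $\dim\mathcal W_1$.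 -/
noncomputable section

open Complex MeasureTheory ContinuousLinearMap
open scoped Matrix

universe u

theorem aux_rank_le {R : Type*} {M M' M'' : Type u} [Ring R] [AddCommGroup M] [Module R M]
    [AddCommGroup M'] [Module R M'] [AddCommGroup M''] [Module R M'']
    (f : M →ₗ[R] M') (g : M →ₗ[R] M'') (h : LinearMap.ker f ≤ LinearMap.ker g) :
    Module.rank R (LinearMap.range g) ≤ Module.rank R (LinearMap.range f) := by
  rw [← (f.quotKerEquivRange).rank_eq, ← (g.quotKerEquivRange).rank_eq]
  refine LinearMap.rank_le_of_surjective
    ((LinearMap.ker f).mapQ (LinearMap.ker g) LinearMap.id (by simpa using h)) ?_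
  intro y
  obtain ⟨x, rfl⟩ := Submodule.Quotient.mk_surjective _ y
  exact ⟨Submodule.Quotient.mk x, rfl⟩

theorem aux_pos_bound {V : Type u} [NormedAddCommGroup V] [InnerProductSpace ℂ V] [CompleteSpace V]
    (X : V →L[ℂ] V) (hXsa : IsSelfAdjoint X)
    (hXpos : ∀ x : V, 0 ≤ (inner ℂ (X x) x : ℂ).re) (a : V) :
    ‖X a‖ ^ 2 ≤ ‖X‖ * (inner ℂ (X a) a : ℂ).re := by
  have hXsa' : ∀ x y : V, (inner ℂ (X x) y : ℂ) = inner ℂ x (X y) := by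
    intro x y
    nth_rewrite 1 [← hXsa.adjoint_eq]
    exact adjoint_inner_left X y x
  rcases eq_or_ne ‖X‖ 0 with h0 | h0
  · have : X = 0 := by rwa [← norm_eq_zero]
    simp [this]
  have hXn : 0 < ‖X‖ := lt_of_le_of_ne (norm_nonneg _) (Ne.symm h0)
  set t : ℝ := -(1 / ‖X‖) with ht
  have key := hXpos (a + (t : ℂ) • X a)
  have hm : (inner ℂ (X a) (X a) : ℂ).re = ‖X a‖ ^ 2 := by
    have := inner_self_eq_norm_sq (𝕜 := ℂ) (X a); simpa using this
  have expand : (inner ℂ (X (a + (t : ℂ) • X a)) (a + (t : ℂ) • X a) : ℂ).re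
      = (inner ℂ (X a) a : ℂ).re + 2 * t * ‖X a‖ ^ 2
        + t ^ 2 * (inner ℂ (X (X a)) (X a) : ℂ).re := by
    have h1 : (inner ℂ (X (X a)) a : ℂ) = inner ℂ (X a) (X a) := by
      rw [hXsa' (X a) a]
    have e1 : (inner ℂ (X (a + (t : ℂ) • X a)) (a + (t : ℂ) • X a) : ℂ)
        = inner ℂ (X a) a + ((2 * t : ℝ) : ℂ) * inner ℂ (X a) (X a)
          + ((t ^ 2 : ℝ) : ℂ) * inner ℂ (X (X a)) (X a) := by
      simp only [map_add, _root_.map_smul, inner_add_left, inner_add_right, inner_smul_left,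
        inner_smul_right, Complex.conj_ofReal, h1]
      push_cast; ring
    rw [e1]
    simp only [Complex.add_re, Complex.mul_re, Complex.ofReal_re, Complex.ofReal_im, hm]
    ring
  have hb : (inner ℂ (X (X a)) (X a) : ℂ).re ≤ ‖X‖ * ‖X a‖ ^ 2 := by
    calc (inner ℂ (X (X a)) (X a) : ℂ).re ≤ ‖X (X a)‖ * ‖X a‖ := by
          have := re_inner_le_norm (𝕜 := ℂ) (X (X a)) (X a)
          simpa using this
    _ ≤ (‖X‖ * ‖X a‖) * ‖X a‖ := by
        have := X.le_opNorm (X a)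
        nlinarith [norm_nonneg (X a)]
    _ = ‖X‖ * ‖X a‖ ^ 2 := by ring
  rw [expand] at key
  have ht2 : t ^ 2 * (inner ℂ (X (X a)) (X a) : ℂ).re ≤ t ^ 2 * (‖X‖ * ‖X a‖ ^ 2) := by
    nlinarith [sq_nonneg t]
  have h2 : 0 ≤ (inner ℂ (X a) a : ℂ).re + 2 * t * ‖X a‖ ^ 2 + t ^ 2 * (‖X‖ * ‖X a‖ ^ 2) := by
    linarith
  have heq : (inner ℂ (X a) a : ℂ).re + 2 * t * ‖X a‖ ^ 2 + t ^ 2 * (‖X‖ * ‖X a‖ ^ 2)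
      = (inner ℂ (X a) a : ℂ).re - ‖X a‖ ^ 2 / ‖X‖ := by
    rw [ht]; field_simp; ring
  rw [heq] at h2
  have h3 : ‖X a‖ ^ 2 / ‖X‖ ≤ (inner ℂ (X a) a : ℂ).re := by linarith
  have := (div_le_iff₀ hXn).mp h3
  linarith [this]


/-- Lemma 4.1 (second part): under the same hypotheses, if in addition
`YY* - X ≥ 0`, `Y` is injective and `X ≥ 0`, then `rank (Y P Y*) = dim W₁`,
`rank X ≤ dim W₁` and `rank (Y P Y* - X) ≤ dim W₁`. -/

theorem leech_lempos_second
    {V W : Type u} [NormedAddCommGroup V] [InnerProductSpace ℂ V] [CompleteSpace V]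
    [NormedAddCommGroup W] [InnerProductSpace ℂ W] [CompleteSpace W]
    (V1 V2 : Submodule ℂ V) (W1 W2 : Submodule ℂ W)
    (hV1closed : IsClosed (V1 : Set V)) (hW1closed : IsClosed (W1 : Set W))
    (hVorth : ∀ v1 ∈ V1, ∀ v2 ∈ V2, (inner ℂ v1 v2 : ℂ) = 0)
    (hVsum : V1 ⊔ V2 = ⊤)
    (hWorth : ∀ w1 ∈ W1, ∀ w2 ∈ W2, (inner ℂ w1 w2 : ℂ) = 0)
    (hWsum : W1 ⊔ W2 = ⊤)
    (X : V →L[ℂ] V) (hXsa : IsSelfAdjoint X)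
    (hXrange : LinearMap.range (X : V →ₗ[ℂ] V) ≤ V1)
    (Y : W →L[ℂ] V)
    (hW1 : W1 = Submodule.comap (Y : W →ₗ[ℂ] V) V1)
    (P : W →L[ℂ] W)
    (hPidem : P ∘L P = P) (hPsa : IsSelfAdjoint P)
    (hPrange : LinearMap.range (P : W →ₗ[ℂ] W) = W1)
    (hpos : OpNonneg (Y ∘L adjoint Y - X))
    (hYinj : Function.Injective Y)
    (hXpos : OpNonneg X) :
    opRank (Y ∘L P ∘L adjoint Y) = Module.rank ℂ W1 ∧
      opRank X ≤ Module.rank ℂ W1 ∧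
      opRank (Y ∘L P ∘L adjoint Y - X) ≤ Module.rank ℂ W1 := by
  classical
  set A : V →L[ℂ] W := adjoint Y with hAdef
  -- basic facts about P
  have hPfix : ∀ w ∈ W1, P w = w := by
    intro w hw
    rw [← hPrange] at hw
    obtain ⟨u, rfl⟩ := hw
    show P (P u) = P u
    calc P (P u) = (P ∘L P) u := rfl
    _ = P u := by rw [hPidem]
  have hPsa' : ∀ x y : W, (inner ℂ (P x) y : ℂ) = inner ℂ x (P y) := by
    intro x y
    nth_rewrite 1 [← hPsa.adjoint_eq]
    exact adjoint_inner_left P y x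
  -- X ≤ Y Y* in the quadratic-form sense
  have hXA : ∀ a : V, (inner ℂ (X a) a : ℂ).re ≤ ‖A a‖ ^ 2 := by
    intro a
    have h := (hpos a).1
    have hsub : ((Y ∘L adjoint Y - X) a) = Y (A a) - X a := rfl
    rw [hsub, inner_sub_left] at h
    have hYA : (inner ℂ (Y (A a)) a : ℂ) = inner ℂ (A a) (A a) := by
      rw [hAdef]; exact (adjoint_inner_right Y (A a) a).symm
    rw [hYA] at h
    have hmm : (inner ℂ (A a) (A a) : ℂ).re = ‖A a‖ ^ 2 := by
      have := inner_self_eq_norm_sq (𝕜 := ℂ) (A a); simpa using this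
    simp only [Complex.sub_re] at h
    linarith [hmm ▸ h]
  -- the key norm bound
  have hbound : ∀ a : V, ‖X a‖ ≤ Real.sqrt ‖X‖ * ‖A a‖ := by
    intro a
    have h1 := aux_pos_bound X hXsa (fun x => (hXpos x).1) a
    have h2 : ‖X a‖ ^ 2 ≤ ‖X‖ * ‖A a‖ ^ 2 := by
      calc ‖X a‖ ^ 2 ≤ ‖X‖ * (inner ℂ (X a) a : ℂ).re := h1
      _ ≤ ‖X‖ * ‖A a‖ ^ 2 := by
          have := hXA a
          nlinarith [norm_nonneg X]
    calc ‖X a‖ = Real.sqrt (‖X a‖ ^ 2) := by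
          rw [Real.sqrt_sq (norm_nonneg _)]
    _ ≤ Real.sqrt (‖X‖ * ‖A a‖ ^ 2) := Real.sqrt_le_sqrt h2
    _ = Real.sqrt ‖X‖ * ‖A a‖ := by
        rw [Real.sqrt_mul (norm_nonneg X), Real.sqrt_sq (norm_nonneg _)]
  set Aₗ : V →ₗ[ℂ] W := (A : V →ₗ[ℂ] W) with hAl
  have hker : LinearMap.ker Aₗ ≤ LinearMap.ker (X : V →ₗ[ℂ] V) := by
    intro a ha
    have ha' : A a = 0 := ha
    have := hbound a
    rw [ha'] at this
    simp only [norm_zero, mul_zero] at this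
    have : ‖X a‖ = 0 := le_antisymm this (norm_nonneg _)
    simpa [norm_eq_zero] using this
  -- the densely defined factor
  set R : Submodule ℂ W := LinearMap.range Aₗ with hRdef
  set f₀ₗ : R →ₗ[ℂ] V :=
    ((LinearMap.ker Aₗ).liftQ (X : V →ₗ[ℂ] V) hker) ∘ₗ
      (Aₗ.quotKerEquivRange.symm : R →ₗ[ℂ] (V ⧸ LinearMap.ker Aₗ)) with hf₀def
  have hf₀ : ∀ (x : R) (a : V), (x : W) = A a → f₀ₗ x = X a := by
    intro x a hxa
    have hx : x = Aₗ.quotKerEquivRange (Submodule.Quotient.mk a) := by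
      apply Subtype.ext
      rw [LinearMap.quotKerEquivRange_apply_mk]
      exact hxa
    rw [hf₀def]
    simp only [LinearMap.coe_comp, Function.comp_apply, LinearEquiv.coe_coe]
    rw [hx, LinearEquiv.symm_apply_apply, Submodule.liftQ_apply]
    rfl
  have hf₀bound : ∀ x : R, ‖f₀ₗ x‖ ≤ Real.sqrt ‖X‖ * ‖x‖ := by
    intro x
    obtain ⟨a, ha⟩ := x.2
    rw [hf₀ x a ha.symm]
    have : ‖(x : W)‖ = ‖A a‖ := by rw [← ha]; rfl
    rw [show ‖x‖ = ‖(x : W)‖ from rfl, this]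
    exact hbound a
  set f₀ : R →L[ℂ] V := LinearMap.mkContinuous f₀ₗ (Real.sqrt ‖X‖) hf₀bound with hf₀c
  -- density of the range of A = Y*
  have horth : Rᗮ = ⊥ := by
    rw [Submodule.eq_bot_iff]
    intro w hw
    have h1 : (inner ℂ (A (Y w)) w : ℂ) = 0 := hw _ ⟨Y w, rfl⟩
    rw [hAdef, adjoint_inner_left] at h1
    have : Y w = 0 := inner_self_eq_zero.mp h1
    exact hYinj (by simpa using this)
  have hdense : Dense (R : Set W) := by
    rw [Submodule.dense_iff_topologicalClosure_eq_top]
    exact Submodule.topologicalClosure_eq_top_iff.mpr horth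
  set C : W →L[ℂ] V :=
    f₀.extend (Submodule.subtypeL R) with hCdef
  have hCA : ∀ a : V, C (A a) = X a := by
    intro a
    have hmem : A a ∈ R := ⟨a, rfl⟩
    have : C ((Submodule.subtypeL R) ⟨A a, hmem⟩) = f₀ ⟨A a, hmem⟩ :=
      ContinuousLinearMap.extend_eq (f := f₀) (e := Submodule.subtypeL R) hdense.denseRange_val
        isUniformEmbedding_subtype_val.isUniformInducing _
    have h2 : f₀ (⟨A a, hmem⟩ : R) = X a := hf₀ ⟨A a, hmem⟩ a rfl
    rw [← h2]
    exact this
  have hfac : ∀ z : V, Y (adjoint C z) = X z := by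
    have hcomp : C ∘L A = X := by ext a; exact hCA a
    have := congrArg adjoint hcomp
    rw [adjoint_comp, hAdef, adjoint_adjoint, hXsa.adjoint_eq] at this
    intro z
    rw [← this]
    rfl
  have hCW1 : ∀ z : V, adjoint C z ∈ W1 := by
    intro z
    rw [hW1]
    refine Submodule.mem_comap.mpr ?_
    show Y (adjoint C z) ∈ V1
    rw [hfac z]
    exact hXrange ⟨z, rfl⟩
  have claimB : ∀ v : V, P (A v) = 0 → X v = 0 := by
    intro v hv
    have h0 : ∀ z : V, (inner ℂ (X v) z : ℂ) = 0 := by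
      intro z
      rw [← hCA v, ← adjoint_inner_right C (A v) z, ← hPfix (adjoint C z) (hCW1 z), ← hPsa', hv]
      exact inner_zero_left _
    exact inner_self_eq_zero.mp (h0 (X v))
  set T : V →L[ℂ] V := Y ∘L P ∘L A with hTdef
  have hTv : ∀ v : V, T v = Y (P (A v)) := fun v => rfl
  have hkerTP : ∀ v : V, T v = 0 → P (A v) = 0 := by
    intro v hv
    apply hYinj
    rw [← hTv v, hv, map_zero]
  have hkerTX : LinearMap.ker (T : V →ₗ[ℂ] V) ≤ LinearMap.ker (X : V →ₗ[ℂ] V) := by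
    intro v hv
    have hv' : T v = 0 := hv
    exact claimB v (hkerTP v hv')
  have hzero : ∀ w : W1, T (Y (w : W)) = 0 → (w : W) = 0 := by
    intro w hw
    have h1 : P (A (Y (w : W))) = 0 := hkerTP _ hw
    have h2 : (inner ℂ (P (A (Y (w : W)))) (w : W) : ℂ) = 0 := by rw [h1]; exact inner_zero_left _
    rw [hPsa', hPfix (w : W) w.2] at h2
    rw [hAdef, adjoint_inner_left] at h2
    have : Y (w : W) = 0 := inner_self_eq_zero.mp h2
    have := hYinj (by simpa using this : Y (w : W) = Y 0)
    exact this
  have hrank1 : Module.rank ℂ (LinearMap.range ((T : V →L[ℂ] V) : V →ₗ[ℂ] V)) = Module.rank ℂ W1 := by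
    apply le_antisymm
    · have hsub : LinearMap.range ((T : V →L[ℂ] V) : V →ₗ[ℂ] V)
          ≤ Submodule.map (Y : W →ₗ[ℂ] V) W1 := by
        rintro x ⟨v, rfl⟩
        refine ⟨P (A v), ?_, rfl⟩
        rw [← hPrange]
        exact ⟨A v, rfl⟩
      calc Module.rank ℂ (LinearMap.range ((T : V →L[ℂ] V) : V →ₗ[ℂ] V))
          ≤ Module.rank ℂ (Submodule.map (Y : W →ₗ[ℂ] V) W1) := Submodule.rank_mono hsub
      _ = Module.rank ℂ W1 := ((Submodule.equivMapOfInjective _ hYinj W1).rank_eq).symm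
    · set ψ : W1 →ₗ[ℂ] V :=
        ((T : V →L[ℂ] V) : V →ₗ[ℂ] V) ∘ₗ (Y : W →ₗ[ℂ] V) ∘ₗ W1.subtype with hψdef
      have hmem : ∀ w : W1, ψ w ∈ LinearMap.range ((T : V →L[ℂ] V) : V →ₗ[ℂ] V) :=
        fun w => ⟨Y (w : W), rfl⟩
      have hinj : Function.Injective (ψ.codRestrict _ hmem) := by
        rw [← LinearMap.ker_eq_bot, LinearMap.ker_codRestrict, LinearMap.ker_eq_bot']
        intro w hw
        have hw' : T (Y (w : W)) = 0 := hw
        exact Subtype.ext (hzero w hw')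
      exact LinearMap.rank_le_of_injective _ hinj
  refine ⟨hrank1, ?_, ?_⟩
  · calc opRank X ≤ Module.rank ℂ (LinearMap.range ((T : V →L[ℂ] V) : V →ₗ[ℂ] V)) :=
        aux_rank_le _ _ hkerTX
    _ = Module.rank ℂ W1 := hrank1
  · have hkerTTX : LinearMap.ker ((T : V →L[ℂ] V) : V →ₗ[ℂ] V)
        ≤ LinearMap.ker ((T - X : V →L[ℂ] V) : V →ₗ[ℂ] V) := by
      intro v hv
      have hv' : T v = 0 := hv
      have hx : X v = 0 := claimB v (hkerTP v hv')
      show (T - X) v = 0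
      rw [ContinuousLinearMap.sub_apply, hv', hx, sub_zero]
    calc opRank (T - X) ≤ Module.rank ℂ (LinearMap.range ((T : V →L[ℂ] V) : V →ₗ[ℂ] V)) :=
        aux_rank_le _ _ hkerTTX
    _ = Module.rank ℂ W1 := hrank1
end
end

section
/- Let $V:\mathbb D\to\mathbb C^{p\times k}$ and $W:\mathbb D\to\mathbb C^{p\times\nu}$ be analytic matrix-valued functions on the open unit disc $\mathbb D$, with Taylor expansions $V(z)=\sum_{j\ge0}z^jV_j$ and $W(z)=\sum_{j\ge0}z^jW_j$, and assume $\sum_{j\ge0}\|V_j\|^2<\infty$ and $\sum_{j\ge0}\|W_j\|^2<\infty$. If $V(z)V(w)^*=W(z)W(w)^*$ for all $z,w\in\mathbb D$, then there exists a $k\times\nu$ complex matrix $M$ which is a partial isometry, i.e. $MM^*M=M$, such that $V(z)M=W(z)$ for all $z\in\mathbb D$. -/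
noncomputable section

open Complex MeasureTheory ContinuousLinearMap
open scoped Matrix

private lemma inner_conjTranspose_mulVec {p n : ℕ} (A B : Matrix (Fin p) (Fin n) ℂ)
    (y y' : Fin p → ℂ) :
    (inner ℂ ((WithLp.equiv 2 (Fin n → ℂ)).symm (Aᴴ *ᵥ y))
      ((WithLp.equiv 2 (Fin n → ℂ)).symm (Bᴴ *ᵥ y')) : ℂ) =
    star y ⬝ᵥ ((A * Bᴴ) *ᵥ y') := by
  rw [WithLp.equiv_symm_apply, EuclideanSpace.inner_toLp_toLp, dotProduct_comm, Matrix.star_mulVec, Matrix.conjTranspose_conjTranspose,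
    Matrix.dotProduct_mulVec, Matrix.dotProduct_mulVec, Matrix.vecMul_vecMul]

private theorem exists_partial_isometry_aux
    {p k ν : ℕ}
    (V : ℂ → Matrix (Fin p) (Fin k) ℂ) (W : ℂ → Matrix (Fin p) (Fin ν) ℂ)
    (hVW : ∀ z ∈ Metric.ball (0:ℂ) 1, ∀ w ∈ Metric.ball (0:ℂ) 1,
      V z * (V w)ᴴ = W z * (W w)ᴴ) :
    ∃ M : Matrix (Fin k) (Fin ν) ℂ, M * Mᴴ * M = M ∧
      ∀ z ∈ Metric.ball (0:ℂ) 1, V z * M = W z := by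
  classical
  set E := EuclideanSpace ℂ (Fin k)
  set F := EuclideanSpace ℂ (Fin ν)
  set e₁ : (Fin k → ℂ) ≃ E := (WithLp.equiv 2 (Fin k → ℂ)).symm with he₁
  set e₂ : (Fin ν → ℂ) ≃ F := (WithLp.equiv 2 (Fin ν → ℂ)).symm with he₂
  set S : Set (E × F) := {q | ∃ z ∈ Metric.ball (0:ℂ) 1, ∃ y : Fin p → ℂ,
    q = (e₁ ((V z)ᴴ *ᵥ y), e₂ ((W z)ᴴ *ᵥ y))} with hS
  set R : Submodule ℂ (E × F) := Submodule.span ℂ S with hR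
  -- the key sesquilinear identity on R
  have key : ∀ q ∈ R, ∀ q' ∈ R, (inner ℂ q.1 q'.1 : ℂ) = inner ℂ q.2 q'.2 := by
    intro q hq
    induction hq using Submodule.span_induction with
    | mem x hx =>
      intro q' hq'
      induction hq' using Submodule.span_induction with
      | mem x' hx' =>
        obtain ⟨z, hz, y, rfl⟩ := hx
        obtain ⟨w, hw, y', rfl⟩ := hx'
        simp only
        rw [inner_conjTranspose_mulVec, inner_conjTranspose_mulVec, hVW z hz w hw]
      | zero => simp
      | add x' y' _ _ h1 h2 =>
        rw [Prod.fst_add, Prod.snd_add, inner_add_right, inner_add_right, h1, h2]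
      | smul a x' _ h1 =>
        simp only [Prod.smul_fst, Prod.smul_snd, inner_smul_right, h1]
    | zero => intro q' _; simp
    | add x y _ _ h1 h2 =>
      intro q' hq'
      rw [Prod.fst_add, Prod.snd_add, inner_add_left, inner_add_left, h1 q' hq', h2 q' hq']
    | smul a x _ h1 =>
      intro q' hq'
      simp only [Prod.smul_fst, Prod.smul_snd, inner_smul_left, h1 q' hq']
  have hzero : ∀ q ∈ R, q.1 = 0 → q.2 = 0 := by
    intro q hq h1
    have h := key q hq q hq
    rw [h1, inner_zero_left] at h
    exact inner_self_eq_zero.mp h.symm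
  -- the subspace A ⊆ E
  set A : Submodule ℂ E := R.map (LinearMap.fst ℂ E F) with hA
  set h : R →ₗ[ℂ] A := LinearMap.codRestrict A ((LinearMap.fst ℂ E F).comp R.subtype)
    (fun r => ⟨(r : E × F), r.2, rfl⟩) with hh
  have hsurj : LinearMap.range h = ⊤ := by
    rw [LinearMap.range_eq_top]
    rintro ⟨a, ha⟩
    obtain ⟨r, hr, hr1⟩ := ha
    exact ⟨⟨r, hr⟩, Subtype.ext hr1⟩
  obtain ⟨s, hs⟩ := h.exists_rightInverse_of_surjective hsurj
  set f : A →ₗ[ℂ] F := ((LinearMap.snd ℂ E F).comp R.subtype).comp s with hf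
  have claim1 : ∀ r : R, f (h r) = (r : E × F).2 := by
    intro r
    have hd : ((s (h r) - r : R) : E × F).1 = 0 := by
      have := hs
      have h1 : h (s (h r)) = h r := by
        rw [← LinearMap.comp_apply, hs]; rfl
      have := congrArg (Subtype.val) h1
      simpa [hh, LinearMap.codRestrict, sub_eq_zero] using this
    have hd2 : ((s (h r) - r : R) : E × F).2 = 0 :=
      hzero _ (s (h r) - r : R).2 hd
    have : ((s (h r) : E × F)).2 = (r : E × F).2 := by
      have := hd2
      simpa [sub_eq_zero] using this
    simpa [hf] using this
  have pair_mem : ∀ a : A, ((a : E), f a) ∈ R := by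
    intro a
    have h1 : h (s a) = a := by rw [← LinearMap.comp_apply, hs]; rfl
    have h2 : ((s a : E × F)).1 = (a : E) := by
      have := congrArg Subtype.val h1
      simpa [hh, LinearMap.codRestrict] using this
    have h3 : f a = ((s a : E × F)).2 := by
      conv_lhs => rw [← h1]
      rw [claim1]
    have : ((a : E), f a) = ((s a : E × F)) := by
      rw [h2.symm, h3]
    rw [this]
    exact (s a).2
  have fiso : ∀ a a' : A, (inner ℂ (f a) (f a') : ℂ) = inner ℂ (a : E) (a' : E) := by
    intro a a'
    exact (key _ (pair_mem a) _ (pair_mem a')).symm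
  -- projection and the operator T
  haveI : CompleteSpace A := FiniteDimensional.complete ℂ A
  set P := A.orthogonalProjectionOnto with hP
  set T : E →ₗ[ℂ] F := f ∘ₗ (P : E →L[ℂ] A).toLinearMap with hT
  set N : Matrix (Fin ν) (Fin k) ℂ := Matrix.toEuclideanLin.symm T with hN
  have hNapp : ∀ v : Fin k → ℂ, N *ᵥ v = e₂.symm (T (e₁ v)) := by
    intro v
    have h1 : Matrix.toEuclideanLin N = T := Matrix.toEuclideanLin.apply_symm_apply T
    have h2 : Matrix.toEuclideanLin N (e₁ v) = e₂ (N *ᵥ v) := rfl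
    rw [h1] at h2
    have := congrArg e₂.symm h2
    simp only [Equiv.symm_apply_apply] at this
    exact this.symm
  have hNHapp : ∀ u : Fin ν → ℂ, Nᴴ *ᵥ u = e₁.symm (LinearMap.adjoint T (e₂ u)) := by
    intro u
    have h1 : Matrix.toEuclideanLin Nᴴ = LinearMap.adjoint T := by
      rw [Matrix.toEuclideanLin_conjTranspose_eq_adjoint, Matrix.toEuclideanLin.apply_symm_apply]
    have h2 : Matrix.toEuclideanLin Nᴴ (e₂ u) = e₁ (Nᴴ *ᵥ u) := rfl
    rw [h1] at h2
    have := congrArg e₁.symm h2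
    simp only [Equiv.symm_apply_apply] at this
    exact this.symm
  -- T on elements of A
  have hTA : ∀ a : A, T (a : E) = f a := by
    intro a
    simp only [hT, LinearMap.comp_apply, ContinuousLinearMap.coe_coe]
    rw [Submodule.orthogonalProjectionOnto_mem_subspace_eq_self]
  -- adjoint T ∘ T = inclusion ∘ P
  have hadj : ∀ x : E, LinearMap.adjoint T (T x) = ((P x : A) : E) := by
    intro x
    apply ext_inner_right ℂ
    intro u
    rw [LinearMap.adjoint_inner_left]
    have h1 : (inner ℂ (T x) (T u) : ℂ) = inner ℂ ((P x : A) : E) ((P u : A) : E) := by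
      simp only [hT, LinearMap.comp_apply, ContinuousLinearMap.coe_coe]
      exact fiso _ _
    rw [h1]
    have h2 : (inner ℂ ((P x : A) : E) (u - ((P u : A) : E)) : ℂ) = 0 := by
      rw [← inner_conj_symm]
      rw [show (inner ℂ (u - ((P u : A) : E)) ((P x : A) : E) : ℂ) = 0 from
        Submodule.starProjection_inner_eq_zero (K := A) u _ (P x).2]
      simp
    have := inner_sub_right (𝕜 := ℂ) ((P x : A) : E) u ((P u : A) : E)
    rw [h2] at this
    linear_combination this
  refine ⟨Nᴴ, ?_, ?_⟩
  · -- partial isometry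
    have hmain : N * Nᴴ * N = N := by
      have : ∀ v : Fin k → ℂ, (N * Nᴴ * N) *ᵥ v = N *ᵥ v := by
        intro v
        rw [← Matrix.mulVec_mulVec, ← Matrix.mulVec_mulVec, hNapp, hNHapp, hNapp]
        simp only [Equiv.apply_symm_apply]
        rw [hadj]
        have : T ((P (e₁ v) : A) : E) = T (e₁ v) := by
          rw [hTA]
          simp only [hT, LinearMap.comp_apply, ContinuousLinearMap.coe_coe]
        rw [this]
      have h1 : Matrix.toLin' (N * Nᴴ * N) = Matrix.toLin' N := by
        apply LinearMap.ext
        intro v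
        simp only [Matrix.toLin'_apply]
        exact this v
      exact Matrix.toLin'.injective h1
    calc Nᴴ * Nᴴᴴ * Nᴴ = Nᴴ * N * Nᴴ := by rw [Matrix.conjTranspose_conjTranspose]
      _ = (N * Nᴴ * N)ᴴ := by simp [Matrix.conjTranspose_mul, Matrix.mul_assoc]
      _ = Nᴴ := by rw [hmain]
  · -- V z * Nᴴ = W z
    intro z hz
    have hcol : ∀ y : Fin p → ℂ, N *ᵥ ((V z)ᴴ *ᵥ y) = (W z)ᴴ *ᵥ y := by
      intro y
      have hmem : ((e₁ ((V z)ᴴ *ᵥ y), e₂ ((W z)ᴴ *ᵥ y)) : E × F) ∈ R :=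
        Submodule.subset_span ⟨z, hz, y, rfl⟩
      have hmemA : e₁ ((V z)ᴴ *ᵥ y) ∈ A := ⟨_, hmem, rfl⟩
      set a : A := ⟨e₁ ((V z)ᴴ *ᵥ y), hmemA⟩ with ha
      have hfa : f a = e₂ ((W z)ᴴ *ᵥ y) := by
        have h1 : h ⟨_, hmem⟩ = a := Subtype.ext rfl
        have := claim1 ⟨_, hmem⟩
        rw [h1] at this
        exact this
      rw [hNapp]
      have : T (e₁ ((V z)ᴴ *ᵥ y)) = f a := hTA a
      rw [this, hfa]
      simp
    have h1 : N * (V z)ᴴ = (W z)ᴴ := by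
      have heq : Matrix.toLin' (N * (V z)ᴴ) = Matrix.toLin' (W z)ᴴ := by
        apply LinearMap.ext
        intro y
        simp only [Matrix.toLin'_apply, ← Matrix.mulVec_mulVec]
        exact hcol y
      exact Matrix.toLin'.injective heq
    have := congrArg Matrix.conjTranspose h1
    simpa [Matrix.conjTranspose_mul] using this

open scoped Matrix.Norms.L2Operator in
/-- Lemma 4.2: if `V`, `W` are analytic matrix functions on the unit disc with
square-summable Taylor coefficients and `V(z)V(w)* = W(z)W(w)*` on the disc,
then there is a partial isometry matrix `M` with `V(z)M = W(z)` on the disc.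
Here `‖·‖` is the `ℓ²`-operator norm on matrices. -/
theorem exists_partial_isometry_of_kernel_eq
    {p k ν : ℕ}
    (V : ℂ → Matrix (Fin p) (Fin k) ℂ) (W : ℂ → Matrix (Fin p) (Fin ν) ℂ)
    (Vc : ℕ → Matrix (Fin p) (Fin k) ℂ) (Wc : ℕ → Matrix (Fin p) (Fin ν) ℂ)
    (hV : ∀ z ∈ Metric.ball (0:ℂ) 1, ∀ i j,
      HasSum (fun n : ℕ => z ^ n * Vc n i j) (V z i j))
    (hW : ∀ z ∈ Metric.ball (0:ℂ) 1, ∀ i j,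
      HasSum (fun n : ℕ => z ^ n * Wc n i j) (W z i j))
    (hVsum : Summable fun n => ‖Vc n‖ ^ 2)
    (hWsum : Summable fun n => ‖Wc n‖ ^ 2)
    (hVW : ∀ z ∈ Metric.ball (0:ℂ) 1, ∀ w ∈ Metric.ball (0:ℂ) 1,
      V z * (V w)ᴴ = W z * (W w)ᴴ) :
    ∃ M : Matrix (Fin k) (Fin ν) ℂ, M * Mᴴ * M = M ∧
      ∀ z ∈ Metric.ball (0:ℂ) 1, V z * M = W z := by
  exact exists_partial_isometry_aux V W hVW
end
end

section
/- Let $G\in H^\infty_{m\times p}$ and $K\in H^\infty_{m\times q}$ with $T_GT_G^*-T_KT_K^*$ positive, and let $\Phi\in H^\infty_{r\times m}$ be an outer spectral factor of $R$. Then: (a) $\mathcal M_\Phi$ is a closed linear subspace of $\ell^2_+(\mathbb C^r)$; (b) $\dim\mathcal M_\Phi\le\dim\mathcal N_\Phi$; (c) $\mathcal M_\Phi$ is invariant under the backward shift, i.e. $S_r^*\mathcal M_\Phi\subseteq\mathcal M_\Phi$. -/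
noncomputable section

open Complex MeasureTheory ContinuousLinearMap
open scoped Matrix

/-- The Hilbert space `ℓ²₊(ℂᵏ)` of unilateral square-summable sequences with
values in `ℂᵏ`. -/
abbrev L2S (k : ℕ) : Type := lp (fun _ : ℕ => EuclideanSpace ℂ (Fin k)) 2

/-- The measure used for "a.e. t ∈ [0,2π]" statements on the unit circle,
parametrized by `t ↦ e^{it}`. -/
def muc : Measure ℝ := volume.restrict (Set.Ioc (0:ℝ) (2 * Real.pi))

/-- The `n`-th Fourier coefficient `Z_n = (1/2π) ∫_0^{2π} e^{-int} Z(e^{it}) dt`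
of a matrix-valued function on the circle, given as `t ↦ Z(e^{it})`. -/
def fcoef {m p : ℕ} (Z : ℝ → Matrix (Fin m) (Fin p) ℂ) (n : ℤ) :
    Matrix (Fin m) (Fin p) ℂ :=
  Matrix.of fun i j =>
    (1 / (2 * Real.pi)) * (∫ t in (0:ℝ)..(2 * Real.pi),
      Complex.exp (-Complex.I * n * t) * Z t i j)

/-- Membership in `L∞_{m×p}`: measurable and (essentially) bounded. -/
def MemLinf {m p : ℕ} (Z : ℝ → Matrix (Fin m) (Fin p) ℂ) : Prop :=
  (∀ i j, Measurable fun t => Z t i j) ∧ ∃ C : ℝ, ∀ t i j, ‖Z t i j‖ ≤ C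

/-- Membership in `H∞_{m×p}`: in `L∞` and all negatively indexed Fourier
coefficients vanish. -/
def MemHinf {m p : ℕ} (Z : ℝ → Matrix (Fin m) (Fin p) ℂ) : Prop :=
  MemLinf Z ∧ ∀ n : ℤ, n < 0 → fcoef Z n = 0

/-- `T` is the (block) Toeplitz operator of `Z`: its block matrix entries are
`(T_Z)_{i,j} = Z_{i-j}`. -/
def IsToeplitz {m p : ℕ} (Z : ℝ → Matrix (Fin m) (Fin p) ℂ)
    (T : L2S p →L[ℂ] L2S m) : Prop :=
  ∀ (i j : ℕ) (v : EuclideanSpace ℂ (Fin p)),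
    T (lp.single 2 j v) i = (fcoef Z ((i : ℤ) - (j : ℤ))).mulVec v

/-- `T` is the analytic (block) Hankel operator of `Z`: block entries
`(H_{Z,+})_{i,j} = Z_{i+j+1}`. -/
def IsHankel {m p : ℕ} (Z : ℝ → Matrix (Fin m) (Fin p) ℂ)
    (T : L2S p →L[ℂ] L2S m) : Prop :=
  ∀ (i j : ℕ) (v : EuclideanSpace ℂ (Fin p)),
    T (lp.single 2 j v) i = (fcoef Z ((i : ℤ) + (j : ℤ) + 1)).mulVec v

/-- `T` is the anti-analytic (block) Hankel operator of `Z`: block entries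
`(H_{Z,-})_{i,j} = Z_{-i-j-1}`. -/
def IsHankelAnti {m p : ℕ} (Z : ℝ → Matrix (Fin m) (Fin p) ℂ)
    (T : L2S p →L[ℂ] L2S m) : Prop :=
  ∀ (i j : ℕ) (v : EuclideanSpace ℂ (Fin p)),
    T (lp.single 2 j v) i = (fcoef Z (-(i : ℤ) - (j : ℤ) - 1)).mulVec v

/-- The value `V(z) = ∑_{n≥0} z^n V_n` of an `H∞`-function at a point `z` of the
open unit disc, computed entrywise from its Fourier (= Taylor) coefficients. -/
def evalD {m p : ℕ} (Z : ℝ → Matrix (Fin m) (Fin p) ℂ) (z : ℂ) :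
    Matrix (Fin m) (Fin p) ℂ :=
  Matrix.of fun i j => ∑' n : ℕ, z ^ n * fcoef Z (n : ℤ) i j

/-- A matrix function on the circle is rational if each entry agrees a.e. with a
quotient of polynomials in `e^{it}` whose denominator has no zeros on the circle. -/
def IsRatl {m p : ℕ} (Z : ℝ → Matrix (Fin m) (Fin p) ℂ) : Prop :=
  ∀ i j, ∃ P Q : Polynomial ℂ,
    (∀ t : ℝ, Q.eval (Complex.exp (Complex.I * t)) ≠ 0) ∧
    (∀ᵐ t ∂muc,
      Z t i j = P.eval (Complex.exp (Complex.I * t)) / Q.eval (Complex.exp (Complex.I * t)))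

/-- `S` is the forward (block) shift on `ℓ²₊(ℂᵏ)`. -/
def IsFwdShift {k : ℕ} (S : L2S k →L[ℂ] L2S k) : Prop :=
  ∀ f : L2S k, S f 0 = 0 ∧ ∀ n : ℕ, S f (n + 1) = f n

/-- `Θ` is inner: `Θ(e^{it})* Θ(e^{it}) = I` a.e. -/
def IsInnerF {r k : ℕ} (Θ : ℝ → Matrix (Fin r) (Fin k) ℂ) : Prop :=
  ∀ᵐ t ∂muc, (Θ t)ᴴ * Θ t = 1

/-- `Θ` is two-sided inner: `Θ(e^{it})* Θ(e^{it}) = I = Θ(e^{it}) Θ(e^{it})*` a.e. -/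
def IsTwoSidedInnerF {r : ℕ} (Θ : ℝ → Matrix (Fin r) (Fin r) ℂ) : Prop :=
  ∀ᵐ t ∂muc, (Θ t)ᴴ * Θ t = 1 ∧ Θ t * (Θ t)ᴴ = 1

/-- The subspace `N_Φ = closure(Im H_G + Im H_K)` of `ℓ²₊(ℂᵐ)`. -/
def NSp {m p q : ℕ} (HG : L2S p →L[ℂ] L2S m) (HK : L2S q →L[ℂ] L2S m) :
    Submodule ℂ (L2S m) :=
  (LinearMap.range (HG : L2S p →ₗ[ℂ] L2S m) ⊔
    LinearMap.range (HK : L2S q →ₗ[ℂ] L2S m)).topologicalClosure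

/-- The subspace `M_Φ = {f ∈ ℓ²₊(ℂʳ) : T_Φ* f ∈ N_Φ}`. -/
def MSp {m p q r : ℕ} (HG : L2S p →L[ℂ] L2S m) (HK : L2S q →L[ℂ] L2S m)
    (TPhi : L2S m →L[ℂ] L2S r) : Submodule ℂ (L2S r) :=
  Submodule.comap ((adjoint TPhi) : L2S r →ₗ[ℂ] L2S m) (NSp HG HK)

/-- `P` is the orthogonal projection of `H` onto `M`: selfadjoint, idempotent,
with range `M`. -/
def IsOrthProjOnto {H : Type*} [NormedAddCommGroup H] [InnerProductSpace ℂ H]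
    [CompleteSpace H] (P : H →L[ℂ] H) (M : Submodule ℂ H) : Prop :=
  P ∘L P = P ∧ IsSelfAdjoint P ∧ LinearMap.range (P : H →ₗ[ℂ] H) = M

namespace ShiftAux

open scoped ENNReal

lemma two_toReal_pos : 0 < (2 : ℝ≥0∞).toReal := by norm_num

lemma summable_norm {k : ℕ} (f : L2S k) :
    Summable fun n => ‖f n‖ ^ (2 : ℝ≥0∞).toReal :=
  (lp.memℓp f).summable two_toReal_pos

/-- The underlying function of the forward shift. -/
def fwdF {k : ℕ} (f : L2S k) : ∀ _ : ℕ, EuclideanSpace ℂ (Fin k) :=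
  fun n => Nat.casesOn n 0 (fun j => f j)

lemma fwdF_mem {k : ℕ} (f : L2S k) : Memℓp (fwdF f) 2 := by
  apply memℓp_gen
  exact (summable_nat_add_iff 1).1 (summable_norm f)

lemma fwdF_tsum {k : ℕ} (f : L2S k) :
    (∑' n, ‖fwdF f n‖ ^ (2 : ℝ≥0∞).toReal) = ∑' n, ‖f n‖ ^ (2 : ℝ≥0∞).toReal := by
  rw [Summable.tsum_eq_zero_add ((fwdF_mem f).summable two_toReal_pos)]
  have h0 : ‖fwdF f 0‖ ^ (2 : ℝ≥0∞).toReal = 0 := by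
    have : fwdF f 0 = 0 := rfl
    rw [this, norm_zero, Real.zero_rpow (by norm_num)]
  rw [h0, zero_add]
  rfl

/-- The underlying function of the backward shift. -/
def bwdF {k : ℕ} (f : L2S k) : ∀ _ : ℕ, EuclideanSpace ℂ (Fin k) :=
  fun n => f (n + 1)

lemma bwdF_mem {k : ℕ} (f : L2S k) : Memℓp (bwdF f) 2 :=
  memℓp_gen ((summable_nat_add_iff 1).2 (summable_norm f))

lemma bwdF_tsum_le {k : ℕ} (f : L2S k) :
    (∑' n, ‖bwdF f n‖ ^ (2 : ℝ≥0∞).toReal) ≤ ∑' n, ‖f n‖ ^ (2 : ℝ≥0∞).toReal := by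
  calc (∑' n, ‖bwdF f n‖ ^ (2 : ℝ≥0∞).toReal)
      = ∑' n, ‖f (n + 1)‖ ^ (2 : ℝ≥0∞).toReal := rfl
    _ ≤ ‖f 0‖ ^ (2 : ℝ≥0∞).toReal + ∑' n, ‖f (n + 1)‖ ^ (2 : ℝ≥0∞).toReal :=
        le_add_of_nonneg_left (Real.rpow_nonneg (norm_nonneg _) _)
    _ = ∑' n, ‖f n‖ ^ (2 : ℝ≥0∞).toReal := (Summable.tsum_eq_zero_add (summable_norm f)).symm

/-- The forward shift as a continuous linear map. -/
def fwd (k : ℕ) : L2S k →L[ℂ] L2S k :=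
  LinearMap.mkContinuous
    { toFun := fun f => (⟨fwdF f, fwdF_mem f⟩ : L2S k)
      map_add' := fun f g => lp.ext (funext fun n => by
        cases n <;> simp [fwdF, lp.coeFn_add] <;> show _ = fwdF f _ + fwdF g _ <;> simp [fwdF])
      map_smul' := fun c f => lp.ext (funext fun n => by
        cases n <;> simp [fwdF, lp.coeFn_smul]) }
    1
    (fun f => by
      rw [one_mul]
      apply le_of_eq
      rw [lp.norm_eq_tsum_rpow two_toReal_pos, lp.norm_eq_tsum_rpow two_toReal_pos]
      congr 1
      exact fwdF_tsum f)

/-- The backward shift as a continuous linear map. -/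
def bwd (k : ℕ) : L2S k →L[ℂ] L2S k :=
  LinearMap.mkContinuous
    { toFun := fun f => (⟨bwdF f, bwdF_mem f⟩ : L2S k)
      map_add' := fun f g => lp.ext (funext fun n => by simp [bwdF, lp.coeFn_add]; rfl)
      map_smul' := fun c f => lp.ext (funext fun n => by simp [bwdF, lp.coeFn_smul]) }
    1
    (fun f => by
      rw [one_mul, lp.norm_eq_tsum_rpow two_toReal_pos, lp.norm_eq_tsum_rpow two_toReal_pos]
      apply Real.rpow_le_rpow (tsum_nonneg fun n => Real.rpow_nonneg (norm_nonneg _) _)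
        (bwdF_tsum_le f) (by positivity))

lemma fwd_apply {k : ℕ} (f : L2S k) (n : ℕ) : (fwd k f) n = fwdF f n := rfl

lemma bwd_apply {k : ℕ} (f : L2S k) (n : ℕ) : (bwd k f) n = f (n + 1) := rfl

lemma fwd_single {k : ℕ} (j : ℕ) (v : EuclideanSpace ℂ (Fin k)) :
    fwd k (lp.single 2 j v) = lp.single 2 (j + 1) v := by
  apply lp.ext
  funext n
  cases n with
  | zero =>
      have h1 : (fwd k (lp.single 2 j v)) 0 = 0 := rfl
      rw [h1, lp.single_apply, Pi.single_eq_of_ne (by omega)]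
  | succ n =>
      have h1 : (fwd k (lp.single 2 j v)) (n + 1) = (lp.single 2 j v : L2S k) n := rfl
      rw [h1, lp.single_apply, lp.single_apply]
      by_cases h : n = j
      · subst h; simp
      · rw [Pi.single_eq_of_ne h, Pi.single_eq_of_ne (by omega)]

/-- Two continuous linear maps between `ℓ²₊` spaces agreeing on all `lp.single`s agree. -/
lemma ext_single {a b : ℕ} {A B : L2S a →L[ℂ] L2S b}
    (h : ∀ (j : ℕ) (v : EuclideanSpace ℂ (Fin a)),
      A (lp.single 2 j v) = B (lp.single 2 j v)) : A = B := by
  refine ContinuousLinearMap.ext fun f => ?_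
  have hf : HasSum (fun j : ℕ => lp.single 2 j (f j)) f :=
    lp.hasSum_single (by norm_num) f
  have hA : HasSum (fun j : ℕ => A (lp.single 2 j (f j))) (A f) := hf.mapL A
  have hB : HasSum (fun j : ℕ => B (lp.single 2 j (f j))) (B f) := hf.mapL B
  simp only [h] at hA
  exact hA.unique hB

/-- The backward shift is the adjoint of the forward shift. -/
lemma bwd_eq_adjoint (k : ℕ) : bwd k = adjoint (fwd k) := by
  rw [ContinuousLinearMap.eq_adjoint_iff]
  intro x y
  rw [lp.inner_eq_tsum, lp.inner_eq_tsum]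
  calc (∑' n, (inner ℂ ((bwd k x) n) (y n) : ℂ))
      = ∑' n, (inner ℂ (x (n + 1)) ((fwd k y) (n + 1)) : ℂ) := rfl
    _ = (inner ℂ (x 0) ((fwd k y) 0) : ℂ)
          + ∑' n, (inner ℂ (x (n + 1)) ((fwd k y) (n + 1)) : ℂ) := by
        have h0 : (fwd k y) 0 = 0 := rfl
        rw [h0, inner_zero_right, zero_add]
    _ = ∑' n, (inner ℂ (x n) ((fwd k y) n) : ℂ) :=
        (Summable.tsum_eq_zero_add (lp.summable_inner (𝕜 := ℂ) x (fwd k y))).symm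

lemma adjoint_fwd (k : ℕ) : adjoint (fwd k) = bwd k := (bwd_eq_adjoint k).symm

/-- An analytic Toeplitz operator intertwines the forward shifts. -/
lemma toeplitz_intertwine {m r : ℕ} (Phi : ℝ → Matrix (Fin r) (Fin m) ℂ)
    (hPhi : MemHinf Phi) (TPhi : L2S m →L[ℂ] L2S r) (hTPhi : IsToeplitz Phi TPhi) :
    TPhi ∘L fwd m = fwd r ∘L TPhi := by
  apply ext_single
  intro j v
  rw [ContinuousLinearMap.comp_apply, ContinuousLinearMap.comp_apply, fwd_single]
  apply lp.ext
  funext n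
  cases n with
  | zero =>
      have h2 : ((fwd r) (TPhi (lp.single 2 j v))) 0 = 0 := rfl
      rw [h2]
      apply WithLp.ofLp_injective
      rw [hTPhi 0 (j + 1) v,
        hPhi.2 (((0 : ℕ) : ℤ) - (((j + 1 : ℕ) : ℤ))) (by push_cast; omega),
        Matrix.zero_mulVec, WithLp.ofLp_zero]
  | succ n =>
      have h2 : ((fwd r) (TPhi (lp.single 2 j v))) (n + 1)
          = (TPhi (lp.single 2 j v)) n := rfl
      rw [h2]
      apply WithLp.ofLp_injective
      rw [hTPhi (n + 1) (j + 1) v, hTPhi n j v]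
      have h3 : (((n + 1 : ℕ) : ℤ)) - (((j + 1 : ℕ) : ℤ)) = ((n : ℕ) : ℤ) - ((j : ℕ) : ℤ) := by
        push_cast; ring
      rw [h3]

/-- An analytic Hankel operator intertwines the backward and forward shifts. -/
lemma hankel_intertwine {m p : ℕ} (G : ℝ → Matrix (Fin m) (Fin p) ℂ)
    (HG : L2S p →L[ℂ] L2S m) (hHG : IsHankel G HG) :
    bwd m ∘L HG = HG ∘L fwd p := by
  apply ext_single
  intro j v
  rw [ContinuousLinearMap.comp_apply, ContinuousLinearMap.comp_apply, fwd_single]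
  apply lp.ext
  funext n
  have h1 : ((bwd m) (HG (lp.single 2 j v))) n = (HG (lp.single 2 j v)) (n + 1) := rfl
  rw [h1]
  apply WithLp.ofLp_injective
  rw [hHG (n + 1) j v, hHG n (j + 1) v]
  have h3 : (((n + 1 : ℕ) : ℤ)) + ((j : ℕ) : ℤ) + 1
      = ((n : ℕ) : ℤ) + (((j + 1 : ℕ) : ℤ)) + 1 := by push_cast; ring
  rw [h3]

/-- `N_Φ` is invariant under the backward shift. -/
lemma NSp_bwd_invariant {m p q : ℕ}
    (G : ℝ → Matrix (Fin m) (Fin p) ℂ) (K : ℝ → Matrix (Fin m) (Fin q) ℂ)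
    (HG : L2S p →L[ℂ] L2S m) (HK : L2S q →L[ℂ] L2S m)
    (hHG : IsHankel G HG) (hHK : IsHankel K HK) :
    ∀ x ∈ (NSp HG HK : Submodule ℂ (L2S m)), bwd m x ∈ NSp HG HK := by
  have hGint := hankel_intertwine G HG hHG
  have hKint := hankel_intertwine K HK hHK
  set W : Submodule ℂ (L2S m) :=
    LinearMap.range (HG : L2S p →ₗ[ℂ] L2S m) ⊔ LinearMap.range (HK : L2S q →ₗ[ℂ] L2S m)
    with hW
  intro x hx
  have hx' : x ∈ closure (W : Set (L2S m)) := by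
    rw [← Submodule.topologicalClosure_coe]; exact hx
  have h2 : bwd m x ∈ closure ((bwd m) '' (W : Set (L2S m))) :=
    image_closure_subset_closure_image (bwd m).continuous ⟨x, hx', rfl⟩
  have h3 : (bwd m) '' (W : Set (L2S m)) ⊆ (W : Set (L2S m)) := by
    rintro _ ⟨y, hy, rfl⟩
    rcases Submodule.mem_sup.1 hy with ⟨a, ha, b, hb, rfl⟩
    obtain ⟨u, rfl⟩ := LinearMap.mem_range.1 ha
    obtain ⟨w, rfl⟩ := LinearMap.mem_range.1 hb
    have e1 : (bwd m) (HG u) = HG ((fwd p) u) := ContinuousLinearMap.ext_iff.1 hGint u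
    have e2 : (bwd m) (HK w) = HK ((fwd q) w) := ContinuousLinearMap.ext_iff.1 hKint w
    have heq : (bwd m) (HG u + HK w) = HG ((fwd p) u) + HK ((fwd q) w) := by
      rw [map_add]
      exact congrArg₂ (· + ·) e1 e2
    rw [hW]
    show bwd m ((HG : L2S p →ₗ[ℂ] L2S m) u + (HK : L2S q →ₗ[ℂ] L2S m) w) ∈ _
    simp only [ContinuousLinearMap.coe_coe] at heq ⊢
    rw [heq]
    exact Submodule.add_mem _
      (Submodule.mem_sup_left (LinearMap.mem_range.2 ⟨fwd p u, rfl⟩))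
      (Submodule.mem_sup_right (LinearMap.mem_range.2 ⟨fwd q w, rfl⟩))
  have h4 : bwd m x ∈ closure (W : Set (L2S m)) := closure_mono h3 h2
  rw [show (NSp HG HK : Submodule ℂ (L2S m)) = W.topologicalClosure from rfl,
    ← SetLike.mem_coe, Submodule.topologicalClosure_coe]
  exact h4

end ShiftAux

/-- Lemma 2.1 (first part): `M_Φ` is a closed subspace of `ℓ²₊(ℂʳ)`,
`dim M_Φ ≤ dim N_Φ`, and `M_Φ` is invariant under the backward shift `S_r^*`. -/
theorem MSp_closed_rank_le_and_shift_invariant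
    {m p q r : ℕ} (hr : r ≤ m)
    (G : ℝ → Matrix (Fin m) (Fin p) ℂ) (K : ℝ → Matrix (Fin m) (Fin q) ℂ)
    (hG : MemHinf G) (hK : MemHinf K)
    (TG : L2S p →L[ℂ] L2S m) (TK : L2S q →L[ℂ] L2S m)
    (hTG : IsToeplitz G TG) (hTK : IsToeplitz K TK)
    (HG : L2S p →L[ℂ] L2S m) (HK : L2S q →L[ℂ] L2S m)
    (hHG : IsHankel G HG) (hHK : IsHankel K HK)
    (hpos : OpNonneg (TG ∘L adjoint TG - TK ∘L adjoint TK))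
    (Phi : ℝ → Matrix (Fin r) (Fin m) ℂ) (hPhi : MemHinf Phi)
    (TPhi : L2S m →L[ℂ] L2S r) (hTPhi : IsToeplitz Phi TPhi)
    (TR : L2S m →L[ℂ] L2S m)
    (hTR : IsToeplitz (fun t => G t * (G t)ᴴ - K t * (K t)ᴴ) TR)
    (hfact : TR = adjoint TPhi ∘L TPhi)
    (houter : LinearMap.ker ((adjoint TPhi) : L2S r →ₗ[ℂ] L2S m) = ⊥)
    (S : L2S r →L[ℂ] L2S r) (hS : IsFwdShift S) :
    IsClosed ((MSp HG HK TPhi : Submodule ℂ (L2S r)) : Set (L2S r)) ∧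
      Module.rank ℂ (MSp HG HK TPhi) ≤ Module.rank ℂ (NSp HG HK) ∧
      ∀ f ∈ MSp HG HK TPhi, adjoint S f ∈ MSp HG HK TPhi := by
  open ShiftAux in
  classical
  -- NSp is closed
  have hNclosed : IsClosed ((NSp HG HK : Submodule ℂ (L2S m)) : Set (L2S m)) :=
    Submodule.isClosed_topologicalClosure _
  -- the underlying set of MSp is a preimage
  have hMset : ((MSp HG HK TPhi : Submodule ℂ (L2S r)) : Set (L2S r))
      = (adjoint TPhi) ⁻¹' ((NSp HG HK : Submodule ℂ (L2S m)) : Set (L2S m)) := rfl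
  refine ⟨?_, ?_, ?_⟩
  · rw [hMset]
    exact hNclosed.preimage (adjoint TPhi).continuous
  · -- rank inequality
    have hrestrict : ∀ x ∈ (MSp HG HK TPhi : Submodule ℂ (L2S r)),
        ((adjoint TPhi : L2S r →ₗ[ℂ] L2S m)) x ∈ (NSp HG HK : Submodule ℂ (L2S m)) :=
      fun x hx => hx
    set F : (MSp HG HK TPhi : Submodule ℂ (L2S r)) →ₗ[ℂ] (NSp HG HK : Submodule ℂ (L2S m)) :=
      LinearMap.restrict ((adjoint TPhi : L2S r →ₗ[ℂ] L2S m)) hrestrict with hF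
    have hinj : Function.Injective F := by
      intro a b hab
      apply Subtype.ext
      have h1 : adjoint TPhi (a : L2S r) = adjoint TPhi (b : L2S r) :=
        congrArg Subtype.val hab
      exact LinearMap.ker_eq_bot.1 houter h1
    exact F.rank_le_of_injective hinj
  · -- backward shift invariance
    intro f hf
    -- identify S with the concrete forward shift
    have hSfwd : S = fwd r := by
      refine ContinuousLinearMap.ext fun g => ?_
      apply lp.ext
      funext n
      cases n with
      | zero => rw [(hS g).1]; rfl
      | succ n => rw [(hS g).2 n]; rfl
    -- Toeplitz intertwining: TPhi ∘ fwd m = fwd r ∘ TPhi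
    have hTfwd : TPhi ∘L fwd m = fwd r ∘L TPhi :=
      toeplitz_intertwine Phi hPhi TPhi hTPhi
    -- pass to adjoints
    have hadj : bwd m ∘L adjoint TPhi = adjoint TPhi ∘L bwd r := by
      have h1 := congrArg adjoint hTfwd
      rwa [adjoint_comp, adjoint_comp, adjoint_fwd, adjoint_fwd] at h1
    have hSb : adjoint S = bwd r := by rw [hSfwd, adjoint_fwd]
    -- NSp is invariant under bwd m
    have hinv : ∀ x ∈ (NSp HG HK : Submodule ℂ (L2S m)), bwd m x ∈ NSp HG HK :=
      NSp_bwd_invariant G K HG HK hHG hHK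
    -- conclude
    have hf' : adjoint TPhi f ∈ (NSp HG HK : Submodule ℂ (L2S m)) := hf
    show adjoint TPhi (adjoint S f) ∈ (NSp HG HK : Submodule ℂ (L2S m))
    rw [hSb]
    have h5 : adjoint TPhi ((bwd r) f) = (bwd m) (adjoint TPhi f) := by
      have := ContinuousLinearMap.ext_iff.1 hadj f
      simp only [ContinuousLinearMap.comp_apply] at this
      exact this.symm
    rw [h5]
    exact hinv _ hf'
end
end

section
/- Let $G\in H^\infty_{m\times p}$ and $K\in H^\infty_{m\times q}$ with $T_GT_G^*-T_KT_K^*$ positive, let $\Phi\in H^\infty_{r\times m}$ be an outer spectral factor of $R$, and let $\Theta\in H^\infty_{r\times k}$ be inner with $\ker T_\Theta^*=\mathcal M_\Phi$. Then the function $F\in L^\infty_{m\times k}$ defined by $F(e^{it})=\Phi(e^{it})^*\Theta(e^{it})$ a.e. belongs to $H^\infty_{m\times k}$, i.e. the Fourier coefficients $F_n$ vanish for all $n<0$. -/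
noncomputable section

open Complex MeasureTheory ContinuousLinearMap
open scoped Matrix

namespace Prop23

open Real MeasureTheory Set Function
open scoped ENNReal

local instance fact_two_pi_pos : Fact (0 < 2 * Real.pi) := ⟨by positivity⟩

/-- Scalar Fourier coefficient of a function on `[0, 2π]`. -/
def sc (f : ℝ → ℂ) (n : ℤ) : ℂ :=
  fourierCoeff (AddCircle.liftIoc (2 * Real.pi) 0 f) n

lemma sc_eq (f : ℝ → ℂ) (n : ℤ) :
    sc f n = (1 / (2 * Real.pi) : ℝ) *
      ∫ t in (0:ℝ)..(2 * Real.pi), Complex.exp (-Complex.I * n * t) * f t := by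
  have hπ : (Real.pi : ℂ) ≠ 0 := Complex.ofReal_ne_zero.mpr Real.pi_ne_zero
  rw [sc, fourierCoeff_eq_intervalIntegral _ n 0, zero_add, Complex.real_smul]
  congr 1
  rw [intervalIntegral.integral_of_le (by positivity),
    intervalIntegral.integral_of_le (by positivity)]
  refine setIntegral_congr_fun measurableSet_Ioc fun x hx => ?_
  rw [AddCircle.liftIoc_coe_apply (by rwa [zero_add]), smul_eq_mul, fourier_coe_apply]
  congr 2
  push_cast
  field_simp

lemma measurable_liftIoc (f : ℝ → ℂ) (hf : Measurable f) :
    Measurable (AddCircle.liftIoc (2 * Real.pi) 0 f) := by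
  have : AddCircle.liftIoc (2 * Real.pi) 0 f =
      fun x => f ((AddCircle.measurableEquivIoc (2 * Real.pi) 0 x : ℝ)) := rfl
  rw [this]
  exact hf.comp (measurable_subtype_coe.comp
    (AddCircle.measurableEquivIoc (2 * Real.pi) 0).measurable)

lemma memLp_liftIoc (f : ℝ → ℂ) (hf : Measurable f) {C : ℝ}
    (hC : ∀ t, ‖f t‖ ≤ C) :
    MemLp (AddCircle.liftIoc (2 * Real.pi) 0 f) 2 AddCircle.haarAddCircle := by
  refine MemLp.of_bound (measurable_liftIoc f hf).aestronglyMeasurable C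
    (ae_of_all _ fun x => ?_)
  exact hC _

/-- Parseval-type identity for the Fourier coefficients of `conj f * g`. -/
lemma hasSum_sc_mul {f g : ℝ → ℂ} (hfm : Measurable f) (hgm : Measurable g)
    {Cf Cg : ℝ} (hCf : ∀ t, ‖f t‖ ≤ Cf) (hCg : ∀ t, ‖g t‖ ≤ Cg)
    (n : ℤ) :
    HasSum (fun s : ℤ => (starRingEnd ℂ) (sc f s) * sc g (s + n))
      (sc (fun t => (starRingEnd ℂ) (f t) * g t) n) := by
  set F := AddCircle.liftIoc (2 * Real.pi) 0 f with hF
  set G0 := AddCircle.liftIoc (2 * Real.pi) 0 g with hG0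
  set Gg := fun x : AddCircle (2 * Real.pi) => fourier (-n) x * G0 x with hGg
  have hFm : MemLp F 2 AddCircle.haarAddCircle := memLp_liftIoc f hfm hCf
  have hGgm : MemLp Gg 2 AddCircle.haarAddCircle := by
    refine MemLp.of_bound (((map_continuous (fourier (-n))).measurable).mul
      (measurable_liftIoc g hgm)).aestronglyMeasurable Cg (ae_of_all _ fun x => ?_)
    have h1 : ‖fourier (-n) x‖ = 1 := Circle.norm_coe _
    calc ‖fourier (-n) x * G0 x‖ = ‖fourier (-n) x‖ * ‖G0 x‖ := norm_mul _ _
      _ = ‖G0 x‖ := by rw [h1, one_mul]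
      _ ≤ Cg := hCg _
  set X := hFm.toLp F with hX
  set Y := hGgm.toLp Gg with hY
  have key := fourierBasis.hasSum_inner_mul_inner X Y
  have hXc : ∀ s : ℤ, fourierCoeff (X : AddCircle (2 * Real.pi) → ℂ) s = sc f s := by
    intro s
    refine integral_congr_ae ?_
    filter_upwards [hFm.coeFn_toLp] with x hx
    rw [hx]
  have hYc : ∀ s : ℤ, fourierCoeff (Y : AddCircle (2 * Real.pi) → ℂ) s = sc g (s + n) := by
    intro s
    have h1 : fourierCoeff (Y : AddCircle (2 * Real.pi) → ℂ) s = fourierCoeff Gg s := by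
      refine integral_congr_ae ?_
      filter_upwards [hGgm.coeFn_toLp] with x hx
      rw [hx]
    rw [h1, sc]
    rw [fourierCoeff, fourierCoeff]
    refine integral_congr_ae (ae_of_all _ fun x => ?_)
    show fourier (-s) x • Gg x = fourier (-(s + n)) x • G0 x
    rw [smul_eq_mul, smul_eq_mul, show Gg x = fourier (-n) x * G0 x from rfl,
      ← mul_assoc, ← fourier_add, ← neg_add]
  have hXY : (inner ℂ X Y : ℂ) = sc (fun t => (starRingEnd ℂ) (f t) * g t) n := by
    rw [MeasureTheory.L2.inner_def]
    have hlift : AddCircle.liftIoc (2 * Real.pi) 0 (fun t => (starRingEnd ℂ) (f t) * g t) =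
        fun x => (starRingEnd ℂ) (F x) * G0 x := rfl
    rw [sc, hlift, fourierCoeff]
    refine integral_congr_ae ?_
    filter_upwards [hFm.coeFn_toLp, hGgm.coeFn_toLp] with x hx1 hx2
    rw [hx1, hx2]
    simp only [RCLike.inner_apply', smul_eq_mul]
    show (starRingEnd ℂ) (F x) * (fourier (-n) x * G0 x) = fourier (-n) x * ((starRingEnd ℂ) (F x) * G0 x)
    ring
  have hterm : ∀ s : ℤ, (inner ℂ X (fourierBasis (T := 2 * Real.pi) s) : ℂ) *
      (inner ℂ (fourierBasis (T := 2 * Real.pi) s) Y : ℂ) =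
      (starRingEnd ℂ) (sc f s) * sc g (s + n) := by
    intro s
    have h1 : (inner ℂ (fourierBasis (T := 2 * Real.pi) s) X : ℂ) = sc f s := by
      rw [← fourierBasis.repr_apply_apply, fourierBasis_repr, hXc]
    have h2 : (inner ℂ (fourierBasis (T := 2 * Real.pi) s) Y : ℂ) = sc g (s + n) := by
      rw [← fourierBasis.repr_apply_apply, fourierBasis_repr, hYc]
    rw [← inner_conj_symm X, h1, h2]
  have hfun : (fun s : ℤ => (starRingEnd ℂ) (sc f s) * sc g (s + n)) = fun s : ℤ =>
      (inner ℂ X (fourierBasis (T := 2 * Real.pi) s) : ℂ) *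
        (inner ℂ (fourierBasis (T := 2 * Real.pi) s) Y : ℂ) :=
    funext fun s => (hterm s).symm
  rw [hfun, ← hXY]
  exact key

lemma intervalIntegrable_exp_mul {h : ℝ → ℂ} (hm : Measurable h) {C : ℝ}
    (hC : ∀ t, ‖h t‖ ≤ C) (n : ℤ) :
    IntervalIntegrable (fun t => Complex.exp (-Complex.I * n * t) * h t)
      MeasureTheory.volume 0 (2 * Real.pi) := by
  have hmeas : Measurable fun t : ℝ => Complex.exp (-Complex.I * n * t) * h t := by
    refine Measurable.mul ?_ hm
    exact Complex.measurable_exp.comp (by measurability)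
  have hbd : ∀ t : ℝ, ‖Complex.exp (-Complex.I * n * t) * h t‖ ≤ C := by
    intro t
    rw [norm_mul]
    have h0 : (-Complex.I * n * t : ℂ).re = 0 := by simp
    have h1 : ‖Complex.exp (-Complex.I * n * t)‖ = 1 := by
      rw [Complex.norm_exp, h0, Real.exp_zero]
    rw [h1, one_mul]
    exact hC t
  rw [intervalIntegrable_iff]
  have hfin : IsFiniteMeasure (MeasureTheory.volume.restrict
      (Set.uIoc (0:ℝ) (2 * Real.pi))) := by
    constructor
    rw [Measure.restrict_apply_univ, Set.uIoc_of_le (by positivity)]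
    exact measure_Ioc_lt_top
  exact ⟨hmeas.aestronglyMeasurable.restrict,
    HasFiniteIntegral.of_bounded (C := C) (ae_of_all _ hbd)⟩

lemma sc_entry {a b : ℕ} (Z : ℝ → Matrix (Fin a) (Fin b) ℂ) (n : ℤ) (i : Fin a) (j : Fin b) :
    sc (fun t => Z t i j) n = fcoef Z n i j := by
  rw [sc_eq]
  simp only [fcoef, Matrix.of_apply]
  push_cast
  ring

lemma fcoef_entry_eq_zero {a b : ℕ} {Z : ℝ → Matrix (Fin a) (Fin b) ℂ}
    (hZ : ∀ n : ℤ, n < 0 → fcoef Z n = 0) {s : ℤ} (hs : s < 0) (i : Fin a) (j : Fin b) :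
    fcoef Z s i j = 0 := by rw [hZ s hs]; rfl

lemma hasSum_fcoef_conjT_mul {a b c : ℕ} {Z1 : ℝ → Matrix (Fin a) (Fin b) ℂ}
    {Z2 : ℝ → Matrix (Fin a) (Fin c) ℂ} (h1 : MemLinf Z1) (h2 : MemLinf Z2)
    (n : ℤ) (i : Fin b) (j : Fin c) :
    HasSum (fun s : ℤ => ∑ l : Fin a, (starRingEnd ℂ) (fcoef Z1 s l i) * fcoef Z2 (s + n) l j)
      (fcoef (fun t => (Z1 t)ᴴ * Z2 t) n i j) := by
  obtain ⟨hm1, C1, hC1⟩ := h1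
  obtain ⟨hm2, C2, hC2⟩ := h2
  have base : ∀ l : Fin a,
      HasSum (fun s : ℤ => (starRingEnd ℂ) (fcoef Z1 s l i) * fcoef Z2 (s + n) l j)
        (sc (fun t => (starRingEnd ℂ) (Z1 t l i) * Z2 t l j) n) := by
    intro l
    have := hasSum_sc_mul (hm1 l i) (hm2 l j) (fun t => hC1 t l i) (fun t => hC2 t l j) n
    simpa only [sc_entry] using this
  have total := hasSum_sum (s := (Finset.univ : Finset (Fin a))) fun l _ => base l
  have hval : fcoef (fun t => (Z1 t)ᴴ * Z2 t) n i j =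
      ∑ l : Fin a, sc (fun t => (starRingEnd ℂ) (Z1 t l i) * Z2 t l j) n := by
    simp only [sc_eq, fcoef, Matrix.of_apply]
    rw [← Finset.mul_sum, ← intervalIntegral.integral_finset_sum]
    · push_cast
      congr 1
      refine intervalIntegral.integral_congr fun x _ => ?_
      rw [Matrix.mul_apply, Finset.mul_sum]
      refine Finset.sum_congr rfl fun l _ => ?_
      rw [Matrix.conjTranspose_apply, starRingEnd_apply]
    · intro l _
      refine intervalIntegrable_exp_mul (((Complex.continuous_conj.measurable).comp
        (hm1 l i)).mul (hm2 l j)) (C := C1 * C2) (fun t => ?_) n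
      show ‖(starRingEnd ℂ) (Z1 t l i) * Z2 t l j‖ ≤ C1 * C2
      rw [norm_mul, Complex.norm_conj]
      exact mul_le_mul (hC1 t l i) (hC2 t l j) (norm_nonneg _)
        ((norm_nonneg _).trans (hC1 t l i))
  exact hval ▸ total

lemma hasSum_fcoef_mul_conjT {a b c : ℕ} {Z1 : ℝ → Matrix (Fin a) (Fin c) ℂ}
    {Z2 : ℝ → Matrix (Fin b) (Fin c) ℂ} (h1 : MemLinf Z1) (h2 : MemLinf Z2)
    (n : ℤ) (i : Fin a) (j : Fin b) :
    HasSum (fun s : ℤ => ∑ l : Fin c, (starRingEnd ℂ) (fcoef Z2 s j l) * fcoef Z1 (s + n) i l)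
      (fcoef (fun t => Z1 t * (Z2 t)ᴴ) n i j) := by
  obtain ⟨hm1, C1, hC1⟩ := h1
  obtain ⟨hm2, C2, hC2⟩ := h2
  have base : ∀ l : Fin c,
      HasSum (fun s : ℤ => (starRingEnd ℂ) (fcoef Z2 s j l) * fcoef Z1 (s + n) i l)
        (sc (fun t => (starRingEnd ℂ) (Z2 t j l) * Z1 t i l) n) := by
    intro l
    have := hasSum_sc_mul (hm2 j l) (hm1 i l) (fun t => hC2 t j l) (fun t => hC1 t i l) n
    simpa only [sc_entry] using this
  have total := hasSum_sum (s := (Finset.univ : Finset (Fin c))) fun l _ => base l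
  have hval : fcoef (fun t => Z1 t * (Z2 t)ᴴ) n i j =
      ∑ l : Fin c, sc (fun t => (starRingEnd ℂ) (Z2 t j l) * Z1 t i l) n := by
    simp only [sc_eq, fcoef, Matrix.of_apply]
    rw [← Finset.mul_sum, ← intervalIntegral.integral_finset_sum]
    · push_cast
      congr 1
      refine intervalIntegral.integral_congr fun x _ => ?_
      rw [Matrix.mul_apply, Finset.mul_sum]
      refine Finset.sum_congr rfl fun l _ => ?_
      rw [Matrix.conjTranspose_apply, starRingEnd_apply]
      ring
    · intro l _
      refine intervalIntegrable_exp_mul (((Complex.continuous_conj.measurable).comp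
        (hm2 j l)).mul (hm1 i l)) (C := C2 * C1) (fun t => ?_) n
      show ‖(starRingEnd ℂ) (Z2 t j l) * Z1 t i l‖ ≤ C2 * C1
      rw [norm_mul, Complex.norm_conj]
      exact mul_le_mul (hC2 t j l) (hC1 t i l) (norm_nonneg _)
        ((norm_nonneg _).trans (hC2 t j l))
  exact hval ▸ total

lemma fcoef_sub_entry {a b : ℕ} {A B : ℝ → Matrix (Fin a) (Fin b) ℂ}
    (hA : MemLinf A) (hB : MemLinf B) (n : ℤ) (i : Fin a) (j : Fin b) :
    fcoef (fun t => A t - B t) n i j = fcoef A n i j - fcoef B n i j := by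
  obtain ⟨hmA, CA, hCA⟩ := hA
  obtain ⟨hmB, CB, hCB⟩ := hB
  simp only [fcoef, Matrix.of_apply]
  rw [← mul_sub, ← intervalIntegral.integral_sub
    (intervalIntegrable_exp_mul (hmA i j) (fun t => hCA t i j) n)
    (intervalIntegrable_exp_mul (hmB i j) (fun t => hCB t i j) n)]
  congr 1
  refine intervalIntegral.integral_congr fun x _ => ?_
  rw [Matrix.sub_apply, mul_sub]

lemma memLinf_mul_conjT {a b c : ℕ} {Z1 : ℝ → Matrix (Fin a) (Fin c) ℂ}
    {Z2 : ℝ → Matrix (Fin b) (Fin c) ℂ} (h1 : MemLinf Z1) (h2 : MemLinf Z2) :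
    MemLinf (fun t => Z1 t * (Z2 t)ᴴ) := by
  obtain ⟨hm1, C1, hC1⟩ := h1
  obtain ⟨hm2, C2, hC2⟩ := h2
  constructor
  · intro i j
    simp only [Matrix.mul_apply, Matrix.conjTranspose_apply]
    exact Finset.measurable_sum _ fun l _ =>
      (hm1 i l).mul ((Complex.continuous_conj.measurable).comp (hm2 j l))
  · refine ⟨(c : ℝ) * (C1 * C2), fun t i j => ?_⟩
    simp only [Matrix.mul_apply, Matrix.conjTranspose_apply]
    calc ‖∑ l, Z1 t i l * (starRingEnd ℂ) (Z2 t j l)‖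
        ≤ ∑ l, ‖Z1 t i l * (starRingEnd ℂ) (Z2 t j l)‖ :=
          norm_sum_le _ _
      _ ≤ ∑ _l : Fin c, C1 * C2 := Finset.sum_le_sum fun l _ => by
          rw [norm_mul, Complex.norm_conj]
          exact mul_le_mul (hC1 t i l) (hC2 t j l) (norm_nonneg _)
            ((norm_nonneg _).trans (hC1 t i l))
      _ = (c : ℝ) * (C1 * C2) := by
          simp [Finset.sum_const, Finset.card_univ, nsmul_eq_mul]

lemma summable_sq {f : ℝ → ℂ} (hm : Measurable f) {C : ℝ}
    (hC : ∀ t, ‖f t‖ ≤ C) :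
    Summable fun s : ℤ => ‖sc f s‖ ^ 2 := by
  have h := (hasSum_sc_mul hm hm hC hC 0).summable
  have h2 := h.map (Complex.reAddGroupHom) Complex.continuous_re
  refine h2.congr fun s => ?_
  show ((starRingEnd ℂ) (sc f s) * sc f (s + 0)).re = ‖sc f s‖ ^ 2
  rw [add_zero, mul_comm, Complex.mul_conj]
  simp [Complex.normSq_eq_norm_sq, ← Complex.ofReal_pow]

lemma summable_sq_entry {a b : ℕ} {Z : ℝ → Matrix (Fin a) (Fin b) ℂ} (h : MemLinf Z)
    (i : Fin a) (j : Fin b) : Summable fun s : ℤ => ‖fcoef Z s i j‖ ^ 2 := by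
  obtain ⟨hm, C, hC⟩ := h
  have := summable_sq (hm i j) fun t => hC t i j
  simpa only [sc_entry] using this

lemma memℓp_of_summable_entries {k : ℕ} (y : ℕ → EuclideanSpace ℂ (Fin k))
    (hy : ∀ l : Fin k, Summable fun s : ℕ => ‖y s l‖ ^ 2) :
    Memℓp y 2 := by
  apply memℓp_gen
  have heq : ∀ s, ‖y s‖ ^ (2 : ℝ≥0∞).toReal = ∑ l : Fin k, ‖y s l‖ ^ 2 := by
    intro s
    rw [show (2 : ℝ≥0∞).toReal = ((2 : ℕ) : ℝ) by norm_num, Real.rpow_natCast,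
      EuclideanSpace.norm_eq, Real.sq_sqrt (Finset.sum_nonneg fun l _ => sq_nonneg _)]
  exact (summable_sum (s := (Finset.univ : Finset (Fin k))) fun l _ => hy l).congr
    fun s => (heq s).symm

/-- Coordinate evaluation as a continuous linear map. -/
noncomputable def ev {k : ℕ} (i : ℕ) : L2S k →L[ℂ] EuclideanSpace ℂ (Fin k) :=
  LinearMap.mkContinuous
    { toFun := fun f => f i
      map_add' := fun f g => by
        show (f + g : L2S k) i = f i + g i
        rw [lp.coeFn_add]; rfl
      map_smul' := fun c f => by
        show (c • f : L2S k) i = c • f i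
        rw [lp.coeFn_smul]; rfl }
    1 fun f => by
      rw [one_mul]
      exact lp.norm_apply_le_norm (by norm_num) f i

@[simp] lemma ev_apply {k : ℕ} (i : ℕ) (f : L2S k) : ev i f = f i := rfl

lemma hasSum_apply_coord {α β : ℕ} (A : L2S α →L[ℂ] L2S β) (x : L2S α) (i : ℕ) :
    HasSum (fun j : ℕ => (A (lp.single 2 j (x j))) i) (A x i) := by
  have h1 : HasSum (fun j : ℕ => lp.single 2 j (x j)) x :=
    lp.hasSum_single (by norm_num) x
  exact (ev (k := β) i).hasSum (A.hasSum h1)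

lemma inner_single_coord {k : ℕ} (f : L2S k) (s : ℕ) (a : Fin k) :
    (inner ℂ (lp.single 2 s (EuclideanSpace.single a 1) : L2S k) f : ℂ) = f s a := by
  rw [lp.inner_single_left, EuclideanSpace.inner_single_left]
  simp

lemma mulVec_esingle {a b : ℕ} (M : Matrix (Fin a) (Fin b) ℂ) (j : Fin b) (l : Fin a) :
    M.mulVec (EuclideanSpace.single j 1) l = M l j := by
  simp [Matrix.mulVec, dotProduct, EuclideanSpace.single_apply, mul_ite]

lemma hasSum_congr {ι M : Type*} [AddCommMonoid M] [TopologicalSpace M]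
    {f g : ι → M} {x : M} (he : ∀ i, f i = g i) (h : HasSum f x) : HasSum g x :=
  (funext he : f = g) ▸ h

lemma hasSum_int_shift {f : ℤ → ℂ} {x : ℂ} (d : ℕ)
    (h0 : ∀ s : ℤ, s < (d : ℤ) → f s = 0) :
    HasSum (fun s : ℕ => f ((s : ℤ) + d)) x ↔ HasSum f x := by
  have hinj : Function.Injective (fun s : ℕ => (s : ℤ) + d) := by
    intro u v huv
    have : (u : ℤ) + d = (v : ℤ) + d := huv
    omega
  refine Function.Injective.hasSum_iff hinj fun s hs => ?_
  refine h0 s ?_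
  by_contra hlt
  push_neg at hlt
  exact hs ⟨(s - d).toNat, by show ((s - d).toNat : ℤ) + d = s; omega⟩

lemma tsum_nat_shift {f : ℕ → ℂ} (d : ℕ) (h0 : ∀ s : ℕ, s < d → f s = 0) :
    ∑' s : ℕ, f (s + d) = ∑' s : ℕ, f s := by
  have hinj : Function.Injective (fun s : ℕ => s + d) := by
    intro u v huv
    have : u + d = v + d := huv
    omega
  refine Function.Injective.tsum_eq hinj fun s hs => ?_
  by_contra hr
  have hlt : s < d := by
    by_contra hge
    push_neg at hge
    exact hr ⟨s - d, by show (s - d) + d = s; omega⟩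
  exact hs (h0 s hlt)

lemma hasSum_nat_shift {f : ℕ → ℂ} {x : ℂ} (d : ℕ) (h0 : ∀ s : ℕ, s < d → f s = 0) :
    HasSum (fun s : ℕ => f (s + d)) x ↔ HasSum f x := by
  have hinj : Function.Injective (fun s : ℕ => s + d) := by
    intro u v huv
    have : u + d = v + d := huv
    omega
  refine Function.Injective.hasSum_iff hinj fun s hs => ?_
  rcases lt_or_ge s d with h | h
  · exact h0 s h
  · exact absurd ⟨s - d, by show (s - d) + d = s; omega⟩ hs

end Prop23

set_option maxHeartbeats 1000000 in
/-- Proposition 2.3 (first part): `F = Φ* Θ` belongs to `H∞_{m×k}`, i.e. its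
negatively indexed Fourier coefficients vanish. -/
theorem fcoef_neg_PhiStarTheta_eq_zero
    {m p q r : ℕ} (hr : r ≤ m)
    (G : ℝ → Matrix (Fin m) (Fin p) ℂ) (K : ℝ → Matrix (Fin m) (Fin q) ℂ)
    (hG : MemHinf G) (hK : MemHinf K)
    (TG : L2S p →L[ℂ] L2S m) (TK : L2S q →L[ℂ] L2S m)
    (hTG : IsToeplitz G TG) (hTK : IsToeplitz K TK)
    (HG : L2S p →L[ℂ] L2S m) (HK : L2S q →L[ℂ] L2S m)
    (hHG : IsHankel G HG) (hHK : IsHankel K HK)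
    (hpos : OpNonneg (TG ∘L adjoint TG - TK ∘L adjoint TK))
    (Phi : ℝ → Matrix (Fin r) (Fin m) ℂ) (hPhi : MemHinf Phi)
    (TPhi : L2S m →L[ℂ] L2S r) (hTPhi : IsToeplitz Phi TPhi)
    (TR : L2S m →L[ℂ] L2S m)
    (hTR : IsToeplitz (fun t => G t * (G t)ᴴ - K t * (K t)ᴴ) TR)
    (hfact : TR = adjoint TPhi ∘L TPhi)
    (houter : LinearMap.ker ((adjoint TPhi : L2S r →L[ℂ] L2S m) : L2S r →ₗ[ℂ] L2S m) = ⊥)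
    {k : ℕ}
    (Theta : ℝ → Matrix (Fin r) (Fin k) ℂ) (hTheta : MemHinf Theta)
    (hinner : IsInnerF Theta)
    (TTheta : L2S k →L[ℂ] L2S r) (hTTheta : IsToeplitz Theta TTheta)
    (hker : LinearMap.ker ((adjoint TTheta : L2S r →L[ℂ] L2S k) : L2S r →ₗ[ℂ] L2S k) = MSp HG HK TPhi) :
    ∀ n : ℤ, n < 0 → fcoef (fun t => (Phi t)ᴴ * Theta t) n = 0 := by
  classical
  intro n hn
  obtain ⟨hPhiL, hPhiA⟩ := hPhi
  obtain ⟨hThetaL, hThetaA⟩ := hTheta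
  obtain ⟨hGL, hGA⟩ := hG
  obtain ⟨hKL, hKA⟩ := hK
  set ν : ℕ := (-n).toNat with hνdef
  have hν : (ν : ℤ) = -n := Int.toNat_of_nonneg (by omega)
  have hν1 : 1 ≤ ν := by omega
  apply Matrix.ext
  intro i0 j0
  rw [Matrix.zero_apply]
  -- the ℓ² element y with y s = column i0 of (fcoef Phi (s+ν))
  have hysum : ∀ l : Fin r, Summable fun s : ℕ => ‖fcoef Phi ((s : ℤ) + ν) l i0‖ ^ 2 := by
    intro l
    exact (Prop23.summable_sq_entry hPhiL l i0).comp_injective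
      (by intro u v huv; have : (u : ℤ) + ν = (v : ℤ) + ν := huv; omega)
  set yf : ℕ → EuclideanSpace ℂ (Fin r) := fun s => WithLp.toLp 2 fun l => fcoef Phi ((s : ℤ) + ν) l i0 with hyf
  have hymem : Memℓp yf 2 := Prop23.memℓp_of_summable_entries yf hysum
  set y : L2S r := ⟨yf, hymem⟩ with hy
  -- the ℓ² elements xG and xK
  have hxGsum : ∀ c : Fin p,
      Summable fun jj : ℕ => ‖(starRingEnd ℂ) (fcoef G ((jj : ℤ) - ν + 1) i0 c)‖ ^ 2 := by
    intro c
    refine ((Prop23.summable_sq_entry hGL i0 c).comp_injective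
      (by intro u v huv; have : (u : ℤ) - ν + 1 = (v : ℤ) - ν + 1 := huv; omega)).congr
      fun jj => ?_
    simp [RCLike.norm_conj]
  set xGf : ℕ → EuclideanSpace ℂ (Fin p) :=
    fun jj => WithLp.toLp 2 fun c => (starRingEnd ℂ) (fcoef G ((jj : ℤ) - ν + 1) i0 c) with hxGf
  set xG : L2S p := ⟨xGf, Prop23.memℓp_of_summable_entries xGf hxGsum⟩ with hxG
  have hxKsum : ∀ c : Fin q,
      Summable fun jj : ℕ => ‖(starRingEnd ℂ) (fcoef K ((jj : ℤ) - ν + 1) i0 c)‖ ^ 2 := by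
    intro c
    refine ((Prop23.summable_sq_entry hKL i0 c).comp_injective
      (by intro u v huv; have : (u : ℤ) - ν + 1 = (v : ℤ) - ν + 1 := huv; omega)).congr
      fun jj => ?_
    simp [RCLike.norm_conj]
  set xKf : ℕ → EuclideanSpace ℂ (Fin q) :=
    fun jj => WithLp.toLp 2 fun c => (starRingEnd ℂ) (fcoef K ((jj : ℤ) - ν + 1) i0 c) with hxKf
  set xK : L2S q := ⟨xKf, Prop23.memℓp_of_summable_entries xKf hxKsum⟩ with hxK
  -- identity (A'): coefficients of R via TPhi
  have hA' : ∀ (N : ℕ) (a : Fin m),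
      fcoef (fun t => G t * (G t)ᴴ - K t * (K t)ᴴ) (N : ℤ) a i0 =
      ∑' tt : ℕ, ∑ l : Fin r,
        (starRingEnd ℂ) (fcoef Phi ((tt : ℤ) - N) l a) * fcoef Phi (tt : ℤ) l i0 := by
    intro N a
    have h1 : TR (lp.single 2 0 (EuclideanSpace.single i0 1)) =
        adjoint TPhi (TPhi (lp.single 2 0 (EuclideanSpace.single i0 1))) := by
      rw [hfact]; rfl
    have h2 : (TR (lp.single 2 0 (EuclideanSpace.single i0 1))) N a =
        fcoef (fun t => G t * (G t)ᴴ - K t * (K t)ᴴ) (N : ℤ) a i0 := by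
      have h3 := hTR N 0 (EuclideanSpace.single i0 1)
      have h4 : (TR (lp.single 2 0 (EuclideanSpace.single i0 1))) N a =
          (fcoef (fun t => G t * (G t)ᴴ - K t * (K t)ᴴ) ((N : ℤ) - ((0 : ℕ) : ℤ))).mulVec
            (EuclideanSpace.single i0 1) a := by rw [h3]
      rw [h4, Nat.cast_zero, sub_zero, Prop23.mulVec_esingle]
    have h5 : (adjoint TPhi (TPhi (lp.single 2 0 (EuclideanSpace.single i0 1)))) N a =
        ∑' tt : ℕ, ∑ l : Fin r,
          (starRingEnd ℂ) (fcoef Phi ((tt : ℤ) - N) l a) * fcoef Phi (tt : ℤ) l i0 := by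
      rw [← Prop23.inner_single_coord
        (adjoint TPhi (TPhi (lp.single 2 0 (EuclideanSpace.single i0 1)))) N a,
        ContinuousLinearMap.adjoint_inner_right, lp.inner_eq_tsum]
      refine tsum_congr fun tt => ?_
      simp only [PiLp.inner_apply, RCLike.inner_apply']
      rw [hTPhi tt N (EuclideanSpace.single a 1), hTPhi tt 0 (EuclideanSpace.single i0 1),
        Nat.cast_zero, sub_zero]
      simp only [PiLp.inner_apply, RCLike.inner_apply', Prop23.mulVec_esingle]
      all_goals rfl
    rw [← h2, h1, h5]
  -- coordinates of adjoint TPhi y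
  have hwcoord : ∀ (s : ℕ) (a : Fin m),
      (adjoint TPhi y) s a = ∑' tt : ℕ, ∑ l : Fin r,
        (starRingEnd ℂ) (fcoef Phi ((tt : ℤ) - s) l a) * fcoef Phi ((tt : ℤ) + ν) l i0 := by
    intro s a
    rw [← Prop23.inner_single_coord (adjoint TPhi y) s a,
      ContinuousLinearMap.adjoint_inner_right, lp.inner_eq_tsum]
    refine tsum_congr fun tt => ?_
    simp only [PiLp.inner_apply, RCLike.inner_apply']
    rw [hTPhi tt s (EuclideanSpace.single a 1)]
    simp only [PiLp.inner_apply, RCLike.inner_apply', Prop23.mulVec_esingle]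
    all_goals rfl
  -- w coordinates equal coefficients of R
  have hwR : ∀ (s : ℕ) (a : Fin m),
      (adjoint TPhi y) s a =
        fcoef (fun t => G t * (G t)ᴴ - K t * (K t)ᴴ) (((s + ν : ℕ)) : ℤ) a i0 := by
    intro s a
    rw [hwcoord s a, hA' (s + ν) a]
    rw [← Prop23.tsum_nat_shift (f := fun tt : ℕ => ∑ l : Fin r,
      (starRingEnd ℂ) (fcoef Phi ((tt : ℤ) - ((s + ν : ℕ) : ℤ)) l a) *
        fcoef Phi (tt : ℤ) l i0) ν ?_]
    · refine tsum_congr fun tt => ?_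
      refine Finset.sum_congr rfl fun l _ => ?_
      have e1 : ((tt + ν : ℕ) : ℤ) = (tt : ℤ) + ν := by push_cast; ring
      have e2 : ((tt + ν : ℕ) : ℤ) - ((s + ν : ℕ) : ℤ) = (tt : ℤ) - s := by push_cast; ring
      rw [e2, e1]
    · intro tt htt
      refine Finset.sum_eq_zero fun l _ => ?_
      rw [Prop23.fcoef_entry_eq_zero hPhiA (by
        have : (tt : ℤ) < ν := by exact_mod_cast htt
        omega) l a, map_zero, zero_mul]
  -- coordinates of HG xG
  have hHGval : ∀ (s : ℕ) (a : Fin m),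
      (HG xG) s a = fcoef (fun t => G t * (G t)ᴴ) (((s + ν : ℕ)) : ℤ) a i0 := by
    intro s a
    set qG : ℕ → ℂ := fun jj => ∑ c : Fin p,
      fcoef G ((s : ℤ) + jj + 1) a c * (starRingEnd ℂ) (fcoef G ((jj : ℤ) - ν + 1) i0 c)
      with hqG
    have h2 := (EuclideanSpace.proj a).hasSum (Prop23.hasSum_apply_coord HG xG s)
    have h3 : HasSum qG ((HG xG) s a) := by
      refine Prop23.hasSum_congr (fun jj => ?_) h2
      show ((HG (lp.single 2 jj (xG jj))) s) a = qG jj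
      have hq2 : qG jj = ∑ c : Fin p, fcoef G ((s : ℤ) + jj + 1) a c *
          (starRingEnd ℂ) (fcoef G ((jj : ℤ) - ν + 1) i0 c) := rfl
      rw [hHG s jj (xG jj), hq2]
      simp only [Matrix.mulVec, dotProduct]
      all_goals rfl
    have hGG := Prop23.hasSum_fcoef_mul_conjT hGL hGL (((s + ν : ℕ)) : ℤ) a i0
    have h0 : ∀ u : ℤ, u < ((0 : ℕ) : ℤ) →
        (∑ c : Fin p, (starRingEnd ℂ) (fcoef G u i0 c) *
          fcoef G (u + ((s + ν : ℕ) : ℤ)) a c) = 0 := by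
      intro u hu
      refine Finset.sum_eq_zero fun c _ => ?_
      rw [Prop23.fcoef_entry_eq_zero hGA (by exact_mod_cast hu) i0 c, map_zero, zero_mul]
    have hGGn := (Prop23.hasSum_int_shift 0 h0).mpr hGG
    have hGGshift : HasSum (fun t : ℕ => qG (t + (ν - 1)))
        (fcoef (fun t => G t * (G t)ᴴ) ((s + ν : ℕ) : ℤ) a i0) := by
      refine Prop23.hasSum_congr (fun t => ?_) hGGn
      have hq3 : qG (t + (ν - 1)) = ∑ c : Fin p,
          fcoef G ((s : ℤ) + ((t + (ν - 1) : ℕ) : ℤ) + 1) a c *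
            (starRingEnd ℂ) (fcoef G (((t + (ν - 1) : ℕ) : ℤ) - ν + 1) i0 c) := rfl
      rw [hq3]
      have e0 : (t : ℤ) + ((0 : ℕ) : ℤ) = (t : ℤ) := by simp
      rw [e0]
      have e1 : ((t + (ν - 1) : ℕ) : ℤ) - ν + 1 = (t : ℤ) := by omega
      have e2 : (s : ℤ) + ((t + (ν - 1) : ℕ) : ℤ) + 1 = (t : ℤ) + ((s + ν : ℕ) : ℤ) := by omega
      rw [e1, e2]
      exact Finset.sum_congr rfl fun c _ => by ring
    have hq0 : ∀ jj : ℕ, jj < ν - 1 → qG jj = 0 := by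
      intro jj hjj
      have hq4 : qG jj = ∑ c : Fin p, fcoef G ((s : ℤ) + jj + 1) a c *
          (starRingEnd ℂ) (fcoef G ((jj : ℤ) - ν + 1) i0 c) := rfl
      rw [hq4]
      refine Finset.sum_eq_zero fun c _ => ?_
      rw [Prop23.fcoef_entry_eq_zero hGA (by omega : (jj : ℤ) - ν + 1 < 0) i0 c,
        map_zero, mul_zero]
    exact h3.unique ((Prop23.hasSum_nat_shift (ν - 1) hq0).mp hGGshift)
  -- coordinates of HK xK
  have hHKval : ∀ (s : ℕ) (a : Fin m),
      (HK xK) s a = fcoef (fun t => K t * (K t)ᴴ) (((s + ν : ℕ)) : ℤ) a i0 := by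
    intro s a
    set qK : ℕ → ℂ := fun jj => ∑ c : Fin q,
      fcoef K ((s : ℤ) + jj + 1) a c * (starRingEnd ℂ) (fcoef K ((jj : ℤ) - ν + 1) i0 c)
      with hqK
    have h2 := (EuclideanSpace.proj a).hasSum (Prop23.hasSum_apply_coord HK xK s)
    have h3 : HasSum qK ((HK xK) s a) := by
      refine Prop23.hasSum_congr (fun jj => ?_) h2
      show ((HK (lp.single 2 jj (xK jj))) s) a = qK jj
      have hq2 : qK jj = ∑ c : Fin q, fcoef K ((s : ℤ) + jj + 1) a c *
          (starRingEnd ℂ) (fcoef K ((jj : ℤ) - ν + 1) i0 c) := rfl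
      rw [hHK s jj (xK jj), hq2]
      simp only [Matrix.mulVec, dotProduct]
      all_goals rfl
    have hKK := Prop23.hasSum_fcoef_mul_conjT hKL hKL (((s + ν : ℕ)) : ℤ) a i0
    have h0 : ∀ u : ℤ, u < ((0 : ℕ) : ℤ) →
        (∑ c : Fin q, (starRingEnd ℂ) (fcoef K u i0 c) *
          fcoef K (u + ((s + ν : ℕ) : ℤ)) a c) = 0 := by
      intro u hu
      refine Finset.sum_eq_zero fun c _ => ?_
      rw [Prop23.fcoef_entry_eq_zero hKA (by exact_mod_cast hu) i0 c, map_zero, zero_mul]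
    have hKKn := (Prop23.hasSum_int_shift 0 h0).mpr hKK
    have hKKshift : HasSum (fun t : ℕ => qK (t + (ν - 1)))
        (fcoef (fun t => K t * (K t)ᴴ) ((s + ν : ℕ) : ℤ) a i0) := by
      refine Prop23.hasSum_congr (fun t => ?_) hKKn
      have hq3 : qK (t + (ν - 1)) = ∑ c : Fin q,
          fcoef K ((s : ℤ) + ((t + (ν - 1) : ℕ) : ℤ) + 1) a c *
            (starRingEnd ℂ) (fcoef K (((t + (ν - 1) : ℕ) : ℤ) - ν + 1) i0 c) := rfl
      rw [hq3]
      have e0 : (t : ℤ) + ((0 : ℕ) : ℤ) = (t : ℤ) := by simp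
      rw [e0]
      have e1 : ((t + (ν - 1) : ℕ) : ℤ) - ν + 1 = (t : ℤ) := by omega
      have e2 : (s : ℤ) + ((t + (ν - 1) : ℕ) : ℤ) + 1 = (t : ℤ) + ((s + ν : ℕ) : ℤ) := by omega
      rw [e1, e2]
      exact Finset.sum_congr rfl fun c _ => by ring
    have hq0 : ∀ jj : ℕ, jj < ν - 1 → qK jj = 0 := by
      intro jj hjj
      have hq4 : qK jj = ∑ c : Fin q, fcoef K ((s : ℤ) + jj + 1) a c *
          (starRingEnd ℂ) (fcoef K ((jj : ℤ) - ν + 1) i0 c) := rfl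
      rw [hq4]
      refine Finset.sum_eq_zero fun c _ => ?_
      rw [Prop23.fcoef_entry_eq_zero hKA (by omega : (jj : ℤ) - ν + 1 < 0) i0 c,
        map_zero, mul_zero]
    exact h3.unique ((Prop23.hasSum_nat_shift (ν - 1) hq0).mp hKKshift)
  -- adjoint TPhi y = HG xG - HK xK
  have hweq : adjoint TPhi y = HG xG - HK xK := by
    apply lp.ext
    funext s
    refine PiLp.ext fun a => ?_
    have hsub : (HG xG - HK xK : L2S m) s a = (HG xG) s a - (HK xK) s a := by
      rw [lp.coeFn_sub]
      rfl
    rw [hsub, hwR s a,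
      Prop23.fcoef_sub_entry (Prop23.memLinf_mul_conjT hGL hGL)
        (Prop23.memLinf_mul_conjT hKL hKL) ((s + ν : ℕ) : ℤ) a i0,
      hHGval s a, hHKval s a]
  -- y belongs to M_Phi, hence to ker (adjoint TTheta)
  have hyM : y ∈ MSp HG HK TPhi := by
    refine Submodule.mem_comap.mpr ?_
    show adjoint TPhi y ∈ NSp HG HK
    rw [hweq]
    refine Submodule.le_topologicalClosure _ ?_
    exact Submodule.sub_mem _ (Submodule.mem_sup_left ⟨xG, rfl⟩)
      (Submodule.mem_sup_right ⟨xK, rfl⟩)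
  have hyker : adjoint TTheta y = 0 := by
    have hmem : y ∈ LinearMap.ker ((adjoint TTheta : L2S r →L[ℂ] L2S k) : L2S r →ₗ[ℂ] L2S k) := by rw [hker]; exact hyM
    exact LinearMap.mem_ker.mp hmem
  -- main Fourier computation
  set u : L2S r := TTheta (lp.single 2 0 (EuclideanSpace.single j0 1)) with hu
  have hFsum := Prop23.hasSum_fcoef_conjT_mul hPhiL hThetaL n i0 j0
  have hvanish : ∀ s : ℤ, s < (ν : ℤ) →
      (∑ l : Fin r, (starRingEnd ℂ) (fcoef Phi s l i0) * fcoef Theta (s + n) l j0) = 0 := by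
    intro s hs
    rcases lt_or_ge s 0 with h | h
    · exact Finset.sum_eq_zero fun l _ => by
        rw [Prop23.fcoef_entry_eq_zero hPhiA h l i0, map_zero, zero_mul]
    · have hneg : s + n < 0 := by omega
      exact Finset.sum_eq_zero fun l _ => by
        rw [Prop23.fcoef_entry_eq_zero hThetaA hneg l j0, mul_zero]
  have hFsum2 := (Prop23.hasSum_int_shift ν hvanish).mpr hFsum
  have hinner := lp.hasSum_inner (𝕜 := ℂ) y u
  have hfun : ∀ s : ℕ, (inner ℂ (y s) (u s) : ℂ) =
      ∑ l : Fin r, (starRingEnd ℂ) (fcoef Phi ((s : ℤ) + ν) l i0) *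
        fcoef Theta ((s : ℤ) + ν + n) l j0 := by
    intro s
    have hus : u s = (fcoef Theta ((s : ℤ) - 0)).mulVec (EuclideanSpace.single j0 1) :=
      hTTheta s 0 _
    have hidx : (s : ℤ) + ν + n = (s : ℤ) - 0 := by omega
    rw [hidx]
    simp only [PiLp.inner_apply, RCLike.inner_apply', hus, Prop23.mulVec_esingle]
    all_goals rfl
  have hinner' : HasSum (fun s : ℕ => ∑ l : Fin r,
      (starRingEnd ℂ) (fcoef Phi ((s : ℤ) + ν) l i0) * fcoef Theta ((s : ℤ) + ν + n) l j0)
      ((inner ℂ y u : ℂ)) := Prop23.hasSum_congr hfun hinner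
  have hzero : (inner ℂ y u : ℂ) = 0 := by
    rw [hu, ← ContinuousLinearMap.adjoint_inner_left, hyker, inner_zero_left]
  exact hFsum2.unique hinner' |>.trans hzero
end
end

section
/- Let $G\in H^\infty_{m\times p}$ and $K\in H^\infty_{m\times q}$ with $T_GT_G^*-T_KT_K^*$ positive, let $\Phi\in H^\infty_{r\times m}$ be an outer spectral factor of $R$, let $\Theta\in H^\infty_{r\times r}$ be two-sided inner with $\ker T_\Theta^*=\mathcal M_\Phi$, and define $F\in L^\infty_{m\times r}$ by $F(e^{it})=\Phi(e^{it})^*\Theta(e^{it})$ a.e. Then $H_\Theta H_\Theta^*=P_{\mathcal M_\Phi}$ and $H_{F,+}H_{F,+}^*=T_\Phi^*P_{\mathcal M_\Phi}T_\Phi$. -/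
noncomputable section

open Complex MeasureTheory ContinuousLinearMap
open scoped Matrix

namespace HankelAux

open Complex MeasureTheory Function Set

instance fact2pi : Fact (0 < 2 * Real.pi) := ⟨by positivity⟩

/-- scalar Fourier coefficient over `[0, 2π]` -/
def cf (f : ℝ → ℂ) (n : ℤ) : ℂ :=
  (1 / (2 * Real.pi)) * ∫ t in (0:ℝ)..(2*Real.pi), Complex.exp (-Complex.I * n * t) * f t

theorem expfac_norm (n : ℤ) (t : ℝ) : ‖Complex.exp (-Complex.I * n * t)‖ = 1 := by
  rw [Complex.norm_exp]
  have : (-Complex.I * n * t).re = 0 := by simp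
  rw [this, Real.exp_zero]

theorem intInt {f : ℝ → ℂ} (hf : Measurable f) {C : ℝ} (hC : ∀ t, ‖f t‖ ≤ C) (n : ℤ) :
    IntervalIntegrable (fun t => Complex.exp (-Complex.I * n * t) * f t)
      volume 0 (2*Real.pi) := by
  rw [intervalIntegrable_iff]
  haveI : IsFiniteMeasure (volume.restrict (Set.uIoc (0:ℝ) (2*Real.pi))) := by
    constructor
    rw [Measure.restrict_apply_univ]
    exact measure_Ioc_lt_top
  have hm : Measurable fun t : ℝ => Complex.exp (-Complex.I * n * t) * f t := by
    exact (Complex.measurable_exp.comp (by measurability)).mul hf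
  refine MemLp.integrable le_rfl (MemLp.of_bound hm.aestronglyMeasurable C ?_)
  refine ae_of_all _ fun t => ?_
  calc ‖Complex.exp (-Complex.I * n * t) * f t‖
      = ‖f t‖ := by rw [norm_mul, expfac_norm, one_mul]
    _ ≤ C := hC t

theorem cf_sum {ι : Type*} (s : Finset ι) (f : ι → ℝ → ℂ)
    (hf : ∀ i, Measurable (f i)) (C : ι → ℝ) (hC : ∀ i t, ‖f i t‖ ≤ C i) (n : ℤ) :
    cf (fun t => ∑ i ∈ s, f i t) n = ∑ i ∈ s, cf (f i) n := by
  unfold cf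
  rw [← Finset.mul_sum]
  congr 1
  rw [← intervalIntegral.integral_finset_sum (fun i _ => intInt (hf i) (hC i) n)]
  congr 1
  ext t
  rw [Finset.mul_sum]

theorem cf_congr {f g : ℝ → ℂ} (h : ∀ᵐ t ∂muc, f t = g t) (n : ℤ) : cf f n = cf g n := by
  unfold cf
  congr 1
  rw [intervalIntegral.integral_of_le (by positivity),
    intervalIntegral.integral_of_le (by positivity)]
  exact integral_congr_ae (h.mono fun t ht => by simp only [ht])

theorem cf_const (c : ℂ) (n : ℤ) : cf (fun _ => c) n = if n = 0 then c else 0 := by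
  unfold cf
  rcases eq_or_ne n 0 with h | h
  · simp only [h, Int.cast_zero, mul_zero, zero_mul, Complex.exp_zero, one_mul, if_true,
      intervalIntegral.integral_const, sub_zero, smul_eq_mul]
    rw [Complex.real_smul]
    push_cast
    have h2 : (2 * Real.pi : ℂ) ≠ 0 := by
      simp [Real.pi_ne_zero]
    field_simp
  · rw [if_neg h]
    have hc : (-Complex.I * n : ℂ) ≠ 0 := by
      simp [Complex.I_ne_zero, Int.cast_eq_zero, h]
    have : ∀ t : ℝ, Complex.exp (-Complex.I * n * t) * c
        = Complex.exp ((-Complex.I * n) * t) * c := fun t => rfl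
    rw [intervalIntegral.integral_congr (fun t _ => this t)]
    rw [intervalIntegral.integral_mul_const, integral_exp_mul_complex hc]
    have he : Complex.exp (-Complex.I * n * (2*Real.pi:ℝ)) = 1 := by
      have := Complex.exp_int_mul_two_pi_mul_I (-n)
      rw [← this]
      congr 1
      push_cast
      ring
    rw [he]
    norm_num

theorem cf_conj (f : ℝ → ℂ) (n : ℤ) :
    cf (fun t => (starRingEnd ℂ) (f t)) n = (starRingEnd ℂ) (cf f (-n)) := by
  unfold cf
  rw [map_mul]
  congr 1
  · rw [show ((1:ℂ) / (2 * Real.pi)) = ((1 / (2 * Real.pi) : ℝ) : ℂ) by push_cast; ring]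
    rw [Complex.conj_ofReal]
  · rw [intervalIntegral.integral_of_le (by positivity),
      intervalIntegral.integral_of_le (by positivity), ← integral_conj]
    apply integral_congr_ae
    refine ae_of_all _ fun t => ?_
    show cexp (-I * n * t) * (starRingEnd ℂ) (f t) = (starRingEnd ℂ) (cexp (-I * (-n : ℤ) * t) * f t)
    rw [map_mul, ← Complex.exp_conj]
    congr 2
    simp only [map_mul, map_neg, Complex.conj_I, Complex.conj_ofReal, map_intCast]
    push_cast
    ring

end HankelAux

namespace HankelAux

open Complex MeasureTheory Function Set AddCircle intervalIntegral

theorem cf_eq_fourierCoeff (f : ℝ → ℂ) (n : ℤ) :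
    cf f n = fourierCoeff (AddCircle.liftIoc (2*Real.pi) 0 f) n := by
  rw [fourierCoeff_liftIoc_eq]
  rw [fourierCoeffOn_eq_integral]
  unfold cf
  rw [zero_add, sub_zero, Complex.real_smul]
  congr 1
  · push_cast
    ring
  apply intervalIntegral.integral_congr
  intro x hx
  show cexp (-I * n * x) * f x = (fourier (-n)) (x : AddCircle (2*Real.pi)) • f x
  rw [smul_eq_mul]
  congr 1
  rw [fourier_coe_apply]
  congr 1
  push_cast
  have hpi : (Real.pi : ℂ) ≠ 0 := by
    simpa using Real.pi_ne_zero
  field_simp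

theorem liftIoc_measurable {f : ℝ → ℂ} (hf : Measurable f) :
    Measurable (AddCircle.liftIoc (2*Real.pi) 0 f) := by
  have : AddCircle.liftIoc (2*Real.pi) 0 f
      = (Set.Ioc (0:ℝ) (0 + 2*Real.pi)).restrict f ∘ (AddCircle.measurableEquivIoc (2*Real.pi) 0) := rfl
  rw [this]
  exact ((hf.comp measurable_subtype_coe).comp
    (AddCircle.measurableEquivIoc (2*Real.pi) 0).measurable)

theorem liftIoc_bound {f : ℝ → ℂ} {C : ℝ} (hC : ∀ t, ‖f t‖ ≤ C) (x : AddCircle (2*Real.pi)) :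
    ‖AddCircle.liftIoc (2*Real.pi) 0 f x‖ ≤ C := hC _

theorem fourierCoeff_congr_ae {f g : AddCircle (2*Real.pi) → ℂ}
    (h : f =ᵐ[haarAddCircle] g) (n : ℤ) : fourierCoeff f n = fourierCoeff g n := by
  unfold fourierCoeff
  exact integral_congr_ae (h.mono fun x hx => by simp only [hx])

/-- Parseval convolution identity on the circle. -/
theorem conv_circle {f g : AddCircle (2*Real.pi) → ℂ} (hf : Measurable f) (hg : Measurable g)
    {Cf Cg : ℝ} (bf : ∀ x, ‖f x‖ ≤ Cf) (bg : ∀ x, ‖g x‖ ≤ Cg) (n : ℤ) :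
    HasSum (fun l : ℤ => fourierCoeff f (n - l) * fourierCoeff g l)
      (fourierCoeff (fun x => f x * g x) n) := by
  classical
  set F0 : AddCircle (2*Real.pi) → ℂ := fun x => (starRingEnd ℂ) (f x) with hF0
  set G0 : AddCircle (2*Real.pi) → ℂ := fun x => fourier (-n) x * g x with hG0
  have hF0m : Measurable F0 := (Complex.continuous_conj.measurable).comp hf
  have hG0m : Measurable G0 := by
    apply Measurable.mul _ hg
    exact (map_continuous (fourier (-n))).measurable
  have hF2 : MemLp F0 2 haarAddCircle :=
    MemLp.of_bound hF0m.aestronglyMeasurable Cf (ae_of_all _ fun x => by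
      show ‖(starRingEnd ℂ) (f x)‖ ≤ Cf
      rw [RCLike.norm_conj]; exact bf x)
  have hG2 : MemLp G0 2 haarAddCircle :=
    MemLp.of_bound hG0m.aestronglyMeasurable Cg (ae_of_all _ fun x => by
      show ‖(fourier (-n) x : ℂ) * g x‖ ≤ Cg
      have h1 : ‖(fourier (-n) x : ℂ)‖ = 1 := by simp [Circle.norm_coe]
      rw [norm_mul, h1, one_mul]; exact bg x)
  set F := hF2.toLp F0 with hF
  set G := hG2.toLp G0 with hG
  have key := fourierBasis.hasSum_inner_mul_inner F G
  have hrG : ∀ l : ℤ, (inner ℂ (fourierBasis (T := 2*Real.pi) l) G : ℂ)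
      = fourierCoeff g (l + n) := by
    intro l
    rw [← fourierBasis.repr_apply_apply G l, fourierBasis_repr]
    rw [fourierCoeff_congr_ae hG2.coeFn_toLp]
    unfold fourierCoeff
    apply MeasureTheory.integral_congr_ae
    refine ae_of_all _ fun x => ?_
    show (fourier (-l) x : ℂ) • ((fourier (-n) x : ℂ) * g x) = (fourier (-(l+n)) x : ℂ) • g x
    rw [smul_eq_mul, smul_eq_mul, neg_add, fourier_add]
    ring
  have hFl : ∀ l : ℤ, (inner ℂ F (fourierBasis (T := 2*Real.pi) l) : ℂ)
      = fourierCoeff f (-l) := by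
    intro l
    rw [← inner_conj_symm, ← fourierBasis.repr_apply_apply F l, fourierBasis_repr]
    rw [fourierCoeff_congr_ae hF2.coeFn_toLp]
    have : fourierCoeff F0 l = (starRingEnd ℂ) (fourierCoeff f (-l)) := by
      unfold fourierCoeff
      rw [← integral_conj]
      apply MeasureTheory.integral_congr_ae
      refine ae_of_all _ fun x => ?_
      show (fourier (-l) x : ℂ) • (starRingEnd ℂ) (f x)
          = (starRingEnd ℂ) ((fourier (-(-l)) x : ℂ) • f x)
      rw [smul_eq_mul, smul_eq_mul, map_mul, neg_neg, ← fourier_neg]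
    rw [this, starRingEnd_self_apply]
  have hFG : (inner ℂ F G : ℂ) = fourierCoeff (fun x => f x * g x) n := by
    rw [MeasureTheory.L2.inner_def]
    rw [show (fourierCoeff (fun x => f x * g x) n)
        = ∫ x, (fourier (-n)) x • (f x * g x) ∂haarAddCircle from rfl]
    apply MeasureTheory.integral_congr_ae
    filter_upwards [hF2.coeFn_toLp, hG2.coeFn_toLp] with x hx hy
    rw [RCLike.inner_apply', hx, hy]
    show (starRingEnd ℂ) ((starRingEnd ℂ) (f x)) * ((fourier (-n)) x * g x) = _
    rw [starRingEnd_self_apply, smul_eq_mul]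
    ring
  have e1 : (fun l : ℤ => (inner ℂ F (fourierBasis (T := 2*Real.pi) l) : ℂ)
        * inner ℂ (fourierBasis (T := 2*Real.pi) l) G)
      = fun l : ℤ => fourierCoeff f (-l) * fourierCoeff g (l + n) :=
    funext fun l => by rw [hFl, hrG]
  rw [e1, hFG] at key
  have key2 := (Equiv.subRight n).hasSum_iff.2 key
  have e2 : ((fun l : ℤ => fourierCoeff f (-l) * fourierCoeff g (l + n))
        ∘ (Equiv.subRight n))
      = fun l : ℤ => fourierCoeff f (n - l) * fourierCoeff g l := by
    funext l
    show fourierCoeff f (-(l - n)) * fourierCoeff g (l - n + n) = _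
    rw [neg_sub, sub_add_cancel]
  rwa [e2] at key2

end HankelAux

namespace HankelAux

open Complex MeasureTheory Function Set AddCircle

theorem conv_cf {f g : ℝ → ℂ} (hf : Measurable f) (hg : Measurable g)
    {Cf Cg : ℝ} (bf : ∀ t, ‖f t‖ ≤ Cf) (bg : ∀ t, ‖g t‖ ≤ Cg) (n : ℤ) :
    HasSum (fun l : ℤ => cf f (n - l) * cf g l) (cf (fun t => f t * g t) n) := by
  have h := conv_circle (liftIoc_measurable hf) (liftIoc_measurable hg)
    (liftIoc_bound bf) (liftIoc_bound bg) n
  have e2 : (fun x => AddCircle.liftIoc (2*Real.pi) 0 f x * AddCircle.liftIoc (2*Real.pi) 0 g x)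
      = AddCircle.liftIoc (2*Real.pi) 0 (fun t => f t * g t) := rfl
  rw [e2] at h
  simp_rw [← cf_eq_fourierCoeff] at h
  exact h

theorem fcoef_entry {m p : ℕ} (Z : ℝ → Matrix (Fin m) (Fin p) ℂ) (n : ℤ) (i : Fin m) (j : Fin p) :
    fcoef Z n i j = cf (fun t => Z t i j) n := rfl

theorem fcoef_conjTranspose {m p : ℕ} (Z : ℝ → Matrix (Fin m) (Fin p) ℂ) (n : ℤ) :
    fcoef (fun t => (Z t)ᴴ) n = (fcoef Z (-n))ᴴ := by
  ext i j
  rw [Matrix.conjTranspose_apply]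
  exact cf_conj (fun t => Z t j i) n

theorem fcoef_mul_hasSum {a b c : ℕ} {A : ℝ → Matrix (Fin a) (Fin b) ℂ}
    {B : ℝ → Matrix (Fin b) (Fin c) ℂ} (hA : MemLinf A) (hB : MemLinf B)
    (n : ℤ) (i : Fin a) (j : Fin c) :
    HasSum (fun l : ℤ => (fcoef A (n - l) * fcoef B l) i j)
      (fcoef (fun t => A t * B t) n i j) := by
  obtain ⟨hAm, CA, hCA⟩ := hA
  obtain ⟨hBm, CB, hCB⟩ := hB
  have hnormA : ∀ t i' j', ‖A t i' j'‖ ≤ CA := fun t i' j' => hCA t i' j'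
  have hnormB : ∀ t i' j', ‖B t i' j'‖ ≤ CB := fun t i' j' => hCB t i' j'
  have hv : fcoef (fun t => A t * B t) n i j
      = ∑ k : Fin b, cf (fun t => A t i k * B t k j) n := by
    rw [fcoef_entry]
    rw [show (fun t => (A t * B t) i j) = fun t => ∑ k, A t i k * B t k j from
      funext fun t => Matrix.mul_apply]
    exact cf_sum Finset.univ _ (fun k => (hAm i k).mul (hBm k j)) (fun _ => CA * CB)
      (fun k t => by
        rw [Pi.mul_apply, norm_mul]
        exact mul_le_mul (hnormA t i k) (hnormB t k j) (norm_nonneg _)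
          ((norm_nonneg _).trans (hnormA t i k))) n
  rw [hv]
  have e1 : (fun l : ℤ => (fcoef A (n - l) * fcoef B l) i j)
      = fun l : ℤ => ∑ k : Fin b, cf (fun t => A t i k) (n - l) * cf (fun t => B t k j) l := by
    funext l
    rw [Matrix.mul_apply]
    rfl
  rw [e1]
  exact hasSum_sum fun k _ =>
    conv_cf (hAm i k) (hBm k j) (hnormA · i k) (hnormB · k j) n

theorem hasSum_euclid {ι : Type*} {k : ℕ} {f : ι → EuclideanSpace ℂ (Fin k)}
    {x : EuclideanSpace ℂ (Fin k)} (h : ∀ c, HasSum (fun i => f i c) (x c)) :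
    HasSum f x := by
  let e := PiLp.continuousLinearEquiv 2 ℂ (fun _ : Fin k => ℂ)
  have h2 : HasSum (fun i => e (f i)) (e x) := Pi.hasSum.mpr h
  have h3 := h2.mapL (e.symm : (∀ _ : Fin k, ℂ) →L[ℂ] EuclideanSpace ℂ (Fin k))
  simpa using h3

theorem conv_mulVec {a b c : ℕ} {A : ℝ → Matrix (Fin a) (Fin b) ℂ}
    {B : ℝ → Matrix (Fin b) (Fin c) ℂ} (hA : MemLinf A) (hB : MemLinf B)
    (n : ℤ) (v : EuclideanSpace ℂ (Fin c)) :
    HasSum (fun l : ℤ => (WithLp.toLp 2 ((fcoef A (n - l) * fcoef B l).mulVec v) : EuclideanSpace ℂ (Fin a)))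
      (WithLp.toLp 2 ((fcoef (fun t => A t * B t) n).mulVec v) : EuclideanSpace ℂ (Fin a)) := by
  apply hasSum_euclid
  intro i
  have e1 : ∀ (M : Matrix (Fin a) (Fin c) ℂ), (M.mulVec v.ofLp) i
      = ∑ j : Fin c, M i j * v.ofLp j := fun M => rfl
  show HasSum (fun l : ℤ => ((fcoef A (n - l) * fcoef B l).mulVec v.ofLp) i)
    (((fcoef (fun t => A t * B t) n).mulVec v.ofLp) i)
  simp_rw [e1]
  exact hasSum_sum fun j _ => (fcoef_mul_hasSum hA hB n i j).mul_right (v j)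

end HankelAux

namespace HankelAux

open Complex ContinuousLinearMap

/-- evaluation at index `i` as a continuous linear map on `ℓ²`. -/
def evalCLM (k : ℕ) (i : ℕ) : L2S k →L[ℂ] EuclideanSpace ℂ (Fin k) :=
  LinearMap.mkContinuous
    { toFun := fun f => f i
      map_add' := fun f g => by
        have := lp.coeFn_add f g
        calc (f + g : L2S k) i = (⇑f + ⇑g) i := by rw [this]
          _ = f i + g i := rfl
      map_smul' := fun c f => by
        have := lp.coeFn_smul c f
        calc (c • f : L2S k) i = (c • ⇑f) i := by rw [this]
          _ = c • f i := rfl } 1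
    (fun f => by
      simpa using lp.norm_apply_le_norm (by norm_num : (2 : ENNReal) ≠ 0) f i)

@[simp] theorem evalCLM_apply {k : ℕ} (i : ℕ) (f : L2S k) : evalCLM k i f = f i := rfl

theorem ext_singles {a b : ℕ} {T S : L2S a →L[ℂ] L2S b}
    (h : ∀ (j : ℕ) (v : EuclideanSpace ℂ (Fin a)),
      T (lp.single 2 j v) = S (lp.single 2 j v)) : T = S := by
  apply ContinuousLinearMap.ext
  intro f
  have hs := lp.hasSum_single (E := fun _ : ℕ => EuclideanSpace ℂ (Fin a))
    (by norm_num : (2 : ENNReal) ≠ ⊤) f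
  have h1 : HasSum (fun i => T (lp.single 2 i (f i))) (T f) := hs.mapL T
  have h2 : HasSum (fun i => S (lp.single 2 i (f i))) (S f) := hs.mapL S
  simp_rw [h] at h1
  exact h1.unique h2

theorem inner_mulVec {a b : ℕ} (M : Matrix (Fin b) (Fin a) ℂ)
    (w : EuclideanSpace ℂ (Fin a)) (v : EuclideanSpace ℂ (Fin b)) :
    (inner ℂ (WithLp.toLp 2 (M.mulVec w) : EuclideanSpace ℂ (Fin b)) v : ℂ)
      = inner ℂ w (WithLp.toLp 2 (Mᴴ.mulVec v) : EuclideanSpace ℂ (Fin a)) := by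
  simp only [PiLp.inner_apply, RCLike.inner_apply', WithLp.ofLp_toLp]
  have e1 : ∀ i : Fin b, (M.mulVec w.ofLp) i = ∑ j, M i j * w.ofLp j :=
    fun i => rfl
  have e2 : ∀ j : Fin a, (Mᴴ.mulVec v.ofLp) j
      = ∑ i, (starRingEnd ℂ) (M i j) * v.ofLp i := fun j => rfl
  simp_rw [e1, e2, map_sum, map_mul, Finset.sum_mul, Finset.mul_sum]
  rw [Finset.sum_comm]
  apply Finset.sum_congr rfl; intro j _
  apply Finset.sum_congr rfl; intro i _
  ring

theorem adjoint_single {a b : ℕ} (T : L2S a →L[ℂ] L2S b)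
    (M : ℕ → ℕ → Matrix (Fin b) (Fin a) ℂ)
    (hT : ∀ (i j : ℕ) v, T (lp.single 2 j v) i = (M i j).mulVec v)
    (j : ℕ) (v : EuclideanSpace ℂ (Fin b)) (i : ℕ) :
    (ContinuousLinearMap.adjoint T) (lp.single 2 j v) i = ((M j i)ᴴ.mulVec v) := by
  show _ = (WithLp.toLp 2 ((M j i)ᴴ.mulVec v) : EuclideanSpace ℂ (Fin a)).ofLp
  congr 1
  apply ext_inner_left ℂ
  intro w
  calc (inner ℂ w ((ContinuousLinearMap.adjoint T) (lp.single 2 j v) i) : ℂ)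
      = inner ℂ (lp.single 2 i w) ((ContinuousLinearMap.adjoint T) (lp.single 2 j v)) := by
        rw [lp.inner_single_left]
    _ = inner ℂ (T (lp.single 2 i w)) (lp.single 2 j v) := by
        rw [ContinuousLinearMap.adjoint_inner_right]
    _ = (starRingEnd ℂ) (inner ℂ (lp.single 2 j v) (T (lp.single 2 i w))) := by
        rw [inner_conj_symm]
    _ = (starRingEnd ℂ) (inner ℂ v (T (lp.single 2 i w) j)) := by
        rw [lp.inner_single_left]
    _ = inner ℂ ((T (lp.single 2 i w)) j) v := by rw [inner_conj_symm]
    _ = inner ℂ (WithLp.toLp 2 ((M j i).mulVec w) : EuclideanSpace ℂ (Fin b)) v := by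
        rw [show T (lp.single 2 i w) j = WithLp.toLp 2 ((M j i).mulVec w) from
          congrArg (WithLp.toLp 2) (hT j i w)]
    _ = inner ℂ w (WithLp.toLp 2 ((M j i)ᴴ.mulVec v) : EuclideanSpace ℂ (Fin a)) := inner_mulVec _ _ _

theorem comp_single_hasSum {a b c : ℕ} (T₁ : L2S b →L[ℂ] L2S c) (T₂ : L2S a →L[ℂ] L2S b)
    (M₁ : ℕ → ℕ → Matrix (Fin c) (Fin b) ℂ) (M₂ : ℕ → ℕ → Matrix (Fin b) (Fin a) ℂ)
    (h₁ : ∀ (i j : ℕ) v, T₁ (lp.single 2 j v) i = (M₁ i j).mulVec v)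
    (h₂ : ∀ (i j : ℕ) v, T₂ (lp.single 2 j v) i = (M₂ i j).mulVec v)
    (j : ℕ) (v : EuclideanSpace ℂ (Fin a)) (i : ℕ) :
    HasSum (fun s : ℕ => (WithLp.toLp 2 ((M₁ i s * M₂ s j).mulVec v) : EuclideanSpace ℂ (Fin c)))
      ((T₁ ∘L T₂) (lp.single 2 j v) i) := by
  have hs := lp.hasSum_single (E := fun _ : ℕ => EuclideanSpace ℂ (Fin b))
    (by norm_num : (2 : ENNReal) ≠ ⊤) (T₂ (lp.single 2 j v))
  have h3 : HasSum (fun s => T₁ (lp.single 2 s (T₂ (lp.single 2 j v) s)))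
      (T₁ (T₂ (lp.single 2 j v))) := hs.mapL T₁
  have h4 := h3.mapL (evalCLM c i)
  have e1 : (fun s => evalCLM c i (T₁ (lp.single 2 s (T₂ (lp.single 2 j v) s))))
      = fun s : ℕ => (WithLp.toLp 2 ((M₁ i s * M₂ s j).mulVec v) : EuclideanSpace ℂ (Fin c)) := by
    funext s
    apply WithLp.ofLp_injective 2
    rw [evalCLM_apply, h₁, h₂, ← Matrix.mulVec_mulVec]
  rw [e1] at h4
  exact h4

end HankelAux

namespace HankelAux

open Complex ContinuousLinearMap Function

theorem memLinf_conjTranspose {m p : ℕ} {Z : ℝ → Matrix (Fin m) (Fin p) ℂ} (h : MemLinf Z) :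
    MemLinf (fun t => (Z t)ᴴ) := by
  obtain ⟨hm, C, hC⟩ := h
  refine ⟨fun i j => ?_, C, fun t i j => ?_⟩
  · exact Complex.continuous_conj.measurable.comp (hm j i)
  · simpa [Matrix.conjTranspose_apply] using hC t j i

theorem fcoef_ae_one {k : ℕ} {W : ℝ → Matrix (Fin k) (Fin k) ℂ}
    (h : ∀ᵐ t ∂muc, W t = 1) (n : ℤ) :
    fcoef W n = if n = 0 then (1 : Matrix (Fin k) (Fin k) ℂ) else 0 := by
  ext i j
  rw [fcoef_entry]
  rw [cf_congr (f := fun t => W t i j) (g := fun _ => (1 : Matrix (Fin k) (Fin k) ℂ) i j)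
    (h.mono fun t ht => by simp only [ht]) n]
  rw [cf_const]
  rcases eq_or_ne n 0 with hn | hn <;> simp [hn]

/-- Identity `T_Θ* T_Θ = 1` for inner `Θ`. -/
theorem isometry_identity {k : ℕ} {Θ : ℝ → Matrix (Fin k) (Fin k) ℂ}
    (hΘ : MemHinf Θ) (hI1 : ∀ᵐ t ∂muc, (Θ t)ᴴ * Θ t = 1)
    {T : L2S k →L[ℂ] L2S k} (hT : IsToeplitz Θ T) :
    ContinuousLinearMap.adjoint T ∘L T = 1 := by
  apply ext_singles; intro j v
  apply lp.ext; funext i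
  have hTa : ∀ (i j : ℕ) (v : EuclideanSpace ℂ (Fin k)),
      (ContinuousLinearMap.adjoint T) (lp.single 2 j v) i
        = ((fcoef Θ ((j:ℤ) - i))ᴴ).mulVec v :=
    fun i j v => adjoint_single T (fun i' j' => fcoef Θ ((i':ℤ) - j')) hT j v i
  have hcomp := comp_single_hasSum (ContinuousLinearMap.adjoint T) T
    (fun i' s => (fcoef Θ ((s:ℤ) - i'))ᴴ) (fun s j' => fcoef Θ ((s:ℤ) - j')) hTa hT j v i
  have conv := conv_mulVec (A := fun t => (Θ t)ᴴ) (B := Θ)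
    (memLinf_conjTranspose hΘ.1) hΘ.1 ((i:ℤ) - j) v
  have hterm : ∀ s : ℕ, (fcoef Θ ((s:ℤ) - i))ᴴ * fcoef Θ ((s:ℤ) - j)
      = fcoef (fun t => (Θ t)ᴴ) ((i:ℤ) - j - ((s:ℤ) - j)) * fcoef Θ ((s:ℤ) - j) := by
    intro s
    rw [show (i:ℤ) - j - ((s:ℤ) - j) = (i:ℤ) - s by ring, fcoef_conjTranspose, neg_sub]
  simp_rw [hterm] at hcomp
  have hg : Function.Injective (fun s : ℕ => (s:ℤ) - j) := by
    intro s t hst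
    simp only at hst
    omega
  have hvan : ∀ l ∉ Set.range (fun s : ℕ => (s:ℤ) - j),
      (WithLp.toLp 2 ((fcoef (fun t => (Θ t)ᴴ) ((i:ℤ) - j - l) * fcoef Θ l).mulVec v) : EuclideanSpace ℂ (Fin k)) = (0 : EuclideanSpace ℂ (Fin k)) := by
    intro l hl
    have hlneg : l < 0 := by
      by_contra hc
      push_neg at hc
      refine hl ⟨(l + j).toNat, ?_⟩
      show (((l + (j:ℤ)).toNat : ℕ) : ℤ) - (j:ℤ) = l
      omega
    rw [hΘ.2 l hlneg, Matrix.mul_zero, Matrix.zero_mulVec, WithLp.toLp_zero]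
  have h5 := (hg.hasSum_iff hvan).mp hcomp
  have h6 := h5.unique conv
  rw [h6, fcoef_ae_one hI1 ((i:ℤ) - j)]
  rcases eq_or_ne i j with hij | hij
  · subst hij
    rw [if_pos (by ring), ContinuousLinearMap.one_apply, lp.single_apply_self (E := fun _ : ℕ => EuclideanSpace ℂ (Fin k))]
    exact congrArg (WithLp.toLp 2) (Matrix.one_mulVec v.ofLp)
  · rw [if_neg (by omega), ContinuousLinearMap.one_apply, lp.single_apply_ne (E := fun _ : ℕ => EuclideanSpace ℂ (Fin k)) 2 j v hij,
      Matrix.zero_mulVec, WithLp.toLp_zero]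

end HankelAux

namespace HankelAux

open Complex ContinuousLinearMap Function

/-- Identity `H_Θ H_Θ* = 1 - T_Θ T_Θ*` for analytic `Θ` with `Θ Θ* = 1` a.e. -/
theorem hankel_complement {k : ℕ} {Θ : ℝ → Matrix (Fin k) (Fin k) ℂ}
    (hΘ : MemHinf Θ) (hI2 : ∀ᵐ t ∂muc, Θ t * (Θ t)ᴴ = 1)
    {T H : L2S k →L[ℂ] L2S k} (hT : IsToeplitz Θ T) (hH : IsHankel Θ H) :
    H ∘L ContinuousLinearMap.adjoint H = 1 - T ∘L ContinuousLinearMap.adjoint T := by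
  apply ext_singles; intro j v
  apply lp.ext; funext i
  have hTa : ∀ (i j : ℕ) (v : EuclideanSpace ℂ (Fin k)),
      (ContinuousLinearMap.adjoint T) (lp.single 2 j v) i
        = ((fcoef Θ ((j:ℤ) - i))ᴴ).mulVec v :=
    fun i j v => adjoint_single T (fun i' j' => fcoef Θ ((i':ℤ) - j')) hT j v i
  have hHa : ∀ (i j : ℕ) (v : EuclideanSpace ℂ (Fin k)),
      (ContinuousLinearMap.adjoint H) (lp.single 2 j v) i
        = ((fcoef Θ ((j:ℤ) + i + 1))ᴴ).mulVec v :=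
    fun i j v => adjoint_single H (fun i' j' => fcoef Θ ((i':ℤ) + j' + 1)) hH j v i
  have hcompT := comp_single_hasSum T (ContinuousLinearMap.adjoint T)
    (fun i' s => fcoef Θ ((i':ℤ) - s)) (fun s j' => (fcoef Θ ((j':ℤ) - s))ᴴ) hT hTa j v i
  have hcompH := comp_single_hasSum H (ContinuousLinearMap.adjoint H)
    (fun i' s => fcoef Θ ((i':ℤ) + s + 1)) (fun s j' => (fcoef Θ ((j':ℤ) + s + 1))ᴴ) hH hHa j v i
  have conv := conv_mulVec (A := Θ) (B := fun t => (Θ t)ᴴ)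
    hΘ.1 (memLinf_conjTranspose hΘ.1) ((i:ℤ) - j) v
  have ht1 : ∀ s : ℕ, fcoef Θ ((i:ℤ) - s) * (fcoef Θ ((j:ℤ) - s))ᴴ
      = fcoef Θ ((i:ℤ) - j - (((s:ℤ)) - j)) * fcoef (fun t => (Θ t)ᴴ) (((s:ℤ)) - j) := by
    intro s
    rw [fcoef_conjTranspose, neg_sub, show (i:ℤ) - j - ((s:ℤ) - j) = (i:ℤ) - s by ring]
  have ht2 : ∀ s : ℕ, fcoef Θ ((i:ℤ) + s + 1) * (fcoef Θ ((j:ℤ) + s + 1))ᴴ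
      = fcoef Θ ((i:ℤ) - j - (-((s:ℤ) + 1) - j)) * fcoef (fun t => (Θ t)ᴴ) (-((s:ℤ) + 1) - j) := by
    intro s
    rw [fcoef_conjTranspose, show -(-((s:ℤ) + 1) - j) = (j:ℤ) + s + 1 by ring,
      show (i:ℤ) - j - (-((s:ℤ) + 1) - j) = (i:ℤ) + s + 1 by ring]
  simp_rw [ht1] at hcompT
  simp_rw [ht2] at hcompH
  have hint := HasSum.of_nat_of_neg_add_one
    (f := fun u : ℤ => (WithLp.toLp 2 ((fcoef Θ ((i:ℤ) - j - (u - j)) * fcoef (fun t => (Θ t)ᴴ) (u - j)).mulVec v)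
      : EuclideanSpace ℂ (Fin k))) hcompT hcompH
  have h5 : HasSum (fun l : ℤ => (WithLp.toLp 2 ((fcoef Θ ((i:ℤ) - j - l) * fcoef (fun t => (Θ t)ᴴ) l).mulVec v)
      : EuclideanSpace ℂ (Fin k)))
      ((T ∘L ContinuousLinearMap.adjoint T) (lp.single 2 j v) i
        + (H ∘L ContinuousLinearMap.adjoint H) (lp.single 2 j v) i) :=
    (Equiv.subRight (j:ℤ)).hasSum_iff.mp hint
  have h6 := h5.unique conv
  have hδ : (WithLp.toLp 2 ((fcoef (fun t => Θ t * (Θ t)ᴴ) ((i:ℤ) - j)).mulVec v) : EuclideanSpace ℂ (Fin k))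
      = (lp.single (E := fun _ : ℕ => EuclideanSpace ℂ (Fin k)) 2 j v) i := by
    rw [fcoef_ae_one hI2]
    rcases eq_or_ne i j with hij | hij
    · subst hij
      rw [if_pos (by ring), lp.single_apply_self (E := fun _ : ℕ => EuclideanSpace ℂ (Fin k))]
      exact congrArg (WithLp.toLp 2) (Matrix.one_mulVec v.ofLp)
    · rw [if_neg (by omega),
        lp.single_apply_ne (E := fun _ : ℕ => EuclideanSpace ℂ (Fin k)) 2 j v hij,
        Matrix.zero_mulVec, WithLp.toLp_zero]
  rw [hδ] at h6
  have goal1 : ((1 - T ∘L ContinuousLinearMap.adjoint T) (lp.single 2 j v)) i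
      = (lp.single (E := fun _ : ℕ => EuclideanSpace ℂ (Fin k)) 2 j v) i
        - (T ∘L ContinuousLinearMap.adjoint T) (lp.single 2 j v) i := by
    rw [ContinuousLinearMap.sub_apply, ContinuousLinearMap.one_apply, lp.coeFn_sub, Pi.sub_apply]
  rw [goal1, ← h6]
  abel

theorem hankel_F_factor {r m : ℕ} {Φ : ℝ → Matrix (Fin r) (Fin m) ℂ}
    {Θ : ℝ → Matrix (Fin r) (Fin r) ℂ} (hΦ : MemHinf Φ) (hΘ : MemHinf Θ)
    {TP : L2S m →L[ℂ] L2S r} (hTP : IsToeplitz Φ TP)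
    {H : L2S r →L[ℂ] L2S r} (hH : IsHankel Θ H)
    {HF : L2S r →L[ℂ] L2S m} (hHF : IsHankel (fun t => (Φ t)ᴴ * Θ t) HF) :
    HF = ContinuousLinearMap.adjoint TP ∘L H := by
  apply ext_singles; intro j v
  apply lp.ext; funext i
  have hPa : ∀ (i j : ℕ) (v : EuclideanSpace ℂ (Fin r)),
      (ContinuousLinearMap.adjoint TP) (lp.single 2 j v) i
        = ((fcoef Φ ((j:ℤ) - i))ᴴ).mulVec v :=
    fun i j v => adjoint_single TP (fun i' j' => fcoef Φ ((i':ℤ) - j')) hTP j v i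
  have hcomp := comp_single_hasSum (ContinuousLinearMap.adjoint TP) H
    (fun i' s => (fcoef Φ ((s:ℤ) - i'))ᴴ) (fun s j' => fcoef Θ ((s:ℤ) + j' + 1)) hPa hH j v i
  have conv := conv_mulVec (A := fun t => (Φ t)ᴴ) (B := Θ)
    (memLinf_conjTranspose hΦ.1) hΘ.1 ((i:ℤ) + j + 1) v
  have hterm : ∀ s : ℕ, (fcoef Φ ((s:ℤ) - i))ᴴ * fcoef Θ ((s:ℤ) + j + 1)
      = fcoef (fun t => (Φ t)ᴴ) ((i:ℤ) + j + 1 - ((s:ℤ) + j + 1)) * fcoef Θ ((s:ℤ) + j + 1) := by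
    intro s
    rw [show (i:ℤ) + j + 1 - ((s:ℤ) + j + 1) = (i:ℤ) - s by ring, fcoef_conjTranspose, neg_sub]
  simp_rw [hterm] at hcomp
  have hg : Function.Injective (fun s : ℕ => (s:ℤ) + j + 1) := by
    intro s t hst
    simp only at hst
    omega
  have hvan : ∀ l ∉ Set.range (fun s : ℕ => (s:ℤ) + j + 1),
      (WithLp.toLp 2 ((fcoef (fun t => (Φ t)ᴴ) ((i:ℤ) + j + 1 - l) * fcoef Θ l).mulVec v) : EuclideanSpace ℂ (Fin m))
        = (0 : EuclideanSpace ℂ (Fin m)) := by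
    intro l hl
    rcases lt_or_ge l 0 with h0 | h0
    · rw [hΘ.2 l h0, Matrix.mul_zero, Matrix.zero_mulVec, WithLp.toLp_zero]
    · have hlj : l ≤ (j:ℤ) := by
        by_contra hc
        push_neg at hc
        refine hl ⟨(l - j - 1).toNat, ?_⟩
        show (((l - (j:ℤ) - 1).toNat : ℕ) : ℤ) + j + 1 = l
        omega
      rw [fcoef_conjTranspose, hΦ.2 (-((i:ℤ) + j + 1 - l)) (by omega),
        Matrix.conjTranspose_zero, Matrix.zero_mul, Matrix.zero_mulVec, WithLp.toLp_zero]
  have h5 := (hg.hasSum_iff hvan).mp hcomp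
  apply WithLp.ofLp_injective 2
  rw [hHF i j v]
  exact congrArg WithLp.ofLp (h5.unique conv).symm

section ProjAlg

variable {E : Type*} [NormedAddCommGroup E] [InnerProductSpace ℂ E] [CompleteSpace E]

theorem proj_unique {P Q : E →L[ℂ] E} (hP2 : P ∘L P = P) (hPsa : IsSelfAdjoint P)
    (hQ2 : Q ∘L Q = Q) (hQsa : IsSelfAdjoint Q)
    (hr : LinearMap.range (P : E →ₗ[ℂ] E) = LinearMap.range (Q : E →ₗ[ℂ] E)) : P = Q := by
  have hQP : Q ∘L P = P := by
    apply ContinuousLinearMap.ext; intro x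
    have hx : P x ∈ LinearMap.range (Q : E →ₗ[ℂ] E) := by
      rw [← hr]
      exact LinearMap.mem_range.mpr ⟨x, rfl⟩
    obtain ⟨y, hy⟩ := LinearMap.mem_range.mp hx
    calc (Q ∘L P) x = Q (P x) := rfl
      _ = Q (Q y) := by rw [← hy]; rfl
      _ = (Q ∘L Q) y := rfl
      _ = Q y := by rw [hQ2]
      _ = P x := hy
  have hPQ : P ∘L Q = Q := by
    apply ContinuousLinearMap.ext; intro x
    have hx : Q x ∈ LinearMap.range (P : E →ₗ[ℂ] E) := by
      rw [hr]
      exact LinearMap.mem_range.mpr ⟨x, rfl⟩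
    obtain ⟨y, hy⟩ := LinearMap.mem_range.mp hx
    calc (P ∘L Q) x = P (Q x) := rfl
      _ = P (P y) := by rw [← hy]; rfl
      _ = (P ∘L P) y := rfl
      _ = P y := by rw [hP2]
      _ = Q x := hy
  calc P = ContinuousLinearMap.adjoint P := (isSelfAdjoint_iff'.mp hPsa).symm
    _ = ContinuousLinearMap.adjoint (Q ∘L P) := by rw [hQP]
    _ = ContinuousLinearMap.adjoint P ∘L ContinuousLinearMap.adjoint Q := adjoint_comp Q P
    _ = P ∘L Q := by rw [isSelfAdjoint_iff'.mp hPsa, isSelfAdjoint_iff'.mp hQsa]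
    _ = Q := hPQ

theorem range_one_sub {T : E →L[ℂ] E} (hiso : ContinuousLinearMap.adjoint T ∘L T = 1) :
    LinearMap.range ((1 - T ∘L ContinuousLinearMap.adjoint T : E →L[ℂ] E) : E →ₗ[ℂ] E)
      = LinearMap.ker ((ContinuousLinearMap.adjoint T : E →L[ℂ] E) : E →ₗ[ℂ] E) := by
  have happ : ∀ x : E, (1 - T ∘L ContinuousLinearMap.adjoint T) x
      = x - T (ContinuousLinearMap.adjoint T x) := fun x => by
    rw [ContinuousLinearMap.sub_apply, ContinuousLinearMap.one_apply,
      ContinuousLinearMap.comp_apply]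
  have hTT : ∀ y : E, ContinuousLinearMap.adjoint T (T y) = y := fun y => by
    have := DFunLike.congr_fun hiso y
    rwa [ContinuousLinearMap.comp_apply, ContinuousLinearMap.one_apply] at this
  apply le_antisymm
  · rintro x hx
    obtain ⟨y, rfl⟩ := LinearMap.mem_range.mp hx
    rw [LinearMap.mem_ker]
    show ContinuousLinearMap.adjoint T ((1 - T ∘L ContinuousLinearMap.adjoint T) y) = 0
    rw [happ, map_sub, hTT, sub_self]
  · intro x hx
    have hx0 : ContinuousLinearMap.adjoint T x = 0 := LinearMap.mem_ker.mp hx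
    refine LinearMap.mem_range.mpr ⟨x, ?_⟩
    show (1 - T ∘L ContinuousLinearMap.adjoint T) x = x
    rw [happ, hx0, map_zero, sub_zero]

theorem idem_one_sub {T : E →L[ℂ] E} (hiso : ContinuousLinearMap.adjoint T ∘L T = 1) :
    (1 - T ∘L ContinuousLinearMap.adjoint T) ∘L (1 - T ∘L ContinuousLinearMap.adjoint T)
      = 1 - T ∘L ContinuousLinearMap.adjoint T := by
  have happ : ∀ x : E, (1 - T ∘L ContinuousLinearMap.adjoint T) x
      = x - T (ContinuousLinearMap.adjoint T x) := fun x => by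
    rw [ContinuousLinearMap.sub_apply, ContinuousLinearMap.one_apply,
      ContinuousLinearMap.comp_apply]
  have hTT : ∀ y : E, ContinuousLinearMap.adjoint T (T y) = y := fun y => by
    have := DFunLike.congr_fun hiso y
    rwa [ContinuousLinearMap.comp_apply, ContinuousLinearMap.one_apply] at this
  apply ContinuousLinearMap.ext; intro x
  show (1 - T ∘L ContinuousLinearMap.adjoint T) ((1 - T ∘L ContinuousLinearMap.adjoint T) x)
      = (1 - T ∘L ContinuousLinearMap.adjoint T) x
  rw [happ, happ]
  have h2 : ContinuousLinearMap.adjoint T (x - T (ContinuousLinearMap.adjoint T x)) = 0 := by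
    rw [map_sub, hTT, sub_self]
  rw [h2, map_zero, sub_zero]

theorem sa_one_sub {T : E →L[ℂ] E} :
    IsSelfAdjoint (1 - T ∘L ContinuousLinearMap.adjoint T) := by
  rw [isSelfAdjoint_iff']
  have := map_sub (ContinuousLinearMap.adjoint (E := E) (F := E))
    (1 : E →L[ℂ] E) (T ∘L ContinuousLinearMap.adjoint T)
  rw [this, adjoint_comp, adjoint_adjoint]
  congr 1
  rw [ContinuousLinearMap.one_def, adjoint_id]

end ProjAlg

end HankelAux
/-- Proposition 3.1 (last part): for two-sided inner `Θ` with
`ker T_Θ* = M_Φ` and `F = Φ* Θ`, one has `H_Θ H_Θ* = P_{M_Φ}` and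
`H_{F,+} H_{F,+}* = T_Φ* P_{M_Φ} T_Φ`. -/
theorem hankel_theta_proj_and_hankel_F
    {m p q r : ℕ} (hr : r ≤ m)
    (G : ℝ → Matrix (Fin m) (Fin p) ℂ) (K : ℝ → Matrix (Fin m) (Fin q) ℂ)
    (hG : MemHinf G) (hK : MemHinf K)
    (TG : L2S p →L[ℂ] L2S m) (TK : L2S q →L[ℂ] L2S m)
    (hTG : IsToeplitz G TG) (hTK : IsToeplitz K TK)
    (HG : L2S p →L[ℂ] L2S m) (HK : L2S q →L[ℂ] L2S m)
    (hHG : IsHankel G HG) (hHK : IsHankel K HK)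
    (hpos : OpNonneg (TG ∘L adjoint TG - TK ∘L adjoint TK))
    (Phi : ℝ → Matrix (Fin r) (Fin m) ℂ) (hPhi : MemHinf Phi)
    (TPhi : L2S m →L[ℂ] L2S r) (hTPhi : IsToeplitz Phi TPhi)
    (TR : L2S m →L[ℂ] L2S m)
    (hTR : IsToeplitz (fun t => G t * (G t)ᴴ - K t * (K t)ᴴ) TR)
    (hfact : TR = adjoint TPhi ∘L TPhi)
    (houter : LinearMap.ker ((adjoint TPhi) : L2S r →ₗ[ℂ] L2S m) = ⊥)
    (Theta : ℝ → Matrix (Fin r) (Fin r) ℂ) (hTheta : MemHinf Theta)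
    (hinner : IsTwoSidedInnerF Theta)
    (TTheta : L2S r →L[ℂ] L2S r) (hTTheta : IsToeplitz Theta TTheta)
    (hker : LinearMap.ker ((adjoint TTheta) : L2S r →ₗ[ℂ] L2S r) = MSp HG HK TPhi)
    (HTheta : L2S r →L[ℂ] L2S r) (hHTheta : IsHankel Theta HTheta)
    (HF : L2S r →L[ℂ] L2S m)
    (hHF : IsHankel (fun t => (Phi t)ᴴ * Theta t) HF)
    (P : L2S r →L[ℂ] L2S r) (hP : IsOrthProjOnto P (MSp HG HK TPhi)) :
    HTheta ∘L adjoint HTheta = P ∧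
      HF ∘L adjoint HF = adjoint TPhi ∘L P ∘L TPhi := by
  classical
  have hI1 : ∀ᵐ t ∂muc, (Theta t)ᴴ * Theta t = 1 := hinner.mono fun t ht => ht.1
  have hI2 : ∀ᵐ t ∂muc, Theta t * (Theta t)ᴴ = 1 := hinner.mono fun t ht => ht.2
  have hiso := HankelAux.isometry_identity hTheta hI1 hTTheta
  have hHH := HankelAux.hankel_complement hTheta hI2 hTTheta hHTheta
  have hPQ : P = 1 - TTheta ∘L adjoint TTheta := by
    apply HankelAux.proj_unique hP.1 hP.2.1 (HankelAux.idem_one_sub hiso) HankelAux.sa_one_sub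
    rw [hP.2.2, HankelAux.range_one_sub hiso, hker]
  have hg1 : HTheta ∘L adjoint HTheta = P := by rw [hHH, hPQ]
  refine ⟨hg1, ?_⟩
  have hHFe := HankelAux.hankel_F_factor hPhi hTheta hTPhi hHTheta hHF
  rw [hHFe, ← hg1, adjoint_comp, adjoint_adjoint]
  apply ContinuousLinearMap.ext
  intro x
  rfl
end
end
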